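/- arXiv:0712.2863 — 8 statements merged into one kernel-verified Lean document; each statement's English description precedes it below -/
import Mathlib

section
/- Given càdlàg functions ℓ ≤ r (ℓ taking values in [−∞,∞), r in (−∞,∞]) and any càdlàg ψ, there exists at most one pair (φ, η) of càdlàg functions solving the extended Skorokhod problem on [ℓ(·), r(·)] for ψ; that is, if (φ, η) and (φ′, η′) both solve the ESP for ψ, then φ = φ′ and η = η′. -/
open Set Filter

/-- A càdlàg real-valued function on `[0, ∞)`. -/
def Cadlag (f : ℝ → ℝ) : Prop :=
  ∀ t : ℝ, 0 ≤ t → ContinuousWithinAt f (Set.Ici t) t ∧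
    (0 < t → ∃ l : ℝ, Filter.Tendsto f (nhdsWithin t (Set.Iio t)) (nhds l))

/-- A càdlàg extended-real-valued function on `[0, ∞)`. -/
def CadlagE (f : ℝ → EReal) : Prop :=
  ∀ t : ℝ, 0 ≤ t → ContinuousWithinAt f (Set.Ici t) t ∧
    (0 < t → ∃ l : EReal, Filter.Tendsto f (nhdsWithin t (Set.Iio t)) (nhds l))

/-- `(φ, η)` solves the extended Skorokhod problem on the time-dependent interval
`[ℓ(·), r(·)]` (with `ℓ` possibly `-∞`-valued and `r` possibly `+∞`-valued) for `ψ`. -/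
def ESPE (l r : ℝ → EReal) (ψ φ η : ℝ → ℝ) : Prop :=
  (∀ t : ℝ, 0 ≤ t → φ t = ψ t + η t ∧ l t ≤ (φ t : EReal) ∧ (φ t : EReal) ≤ r t) ∧
  (∀ s t : ℝ, 0 ≤ s → s ≤ t → (∀ u, s < u → u ≤ t → (φ u : EReal) < r u) → η s ≤ η t) ∧
  (∀ s t : ℝ, 0 ≤ s → s ≤ t → (∀ u, s < u → u ≤ t → l u < (φ u : EReal)) → η t ≤ η s) ∧
  (∀ t : ℝ, 0 < t →
    ((φ t : EReal) < r t → Function.leftLim η t ≤ η t) ∧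
    (l t < (φ t : EReal) → η t ≤ Function.leftLim η t)) ∧
  (((φ 0 : EReal) < r 0 → 0 ≤ η 0) ∧ (l 0 < (φ 0 : EReal) → η 0 ≤ 0))

/-
If two solutions differ, their difference `θ = φ - φ' = η - η'` is positive somewhere; go back to
the last time `s` before which `θ ≤ 0`. On the positive run after `s`, the constraint `φ' < φ` keeps
`φ` off its lower barrier and `φ'` off its upper one, so `η` cannot increase and `η'` cannot
decrease; hence `θ` cannot grow. The same constraint at `s` forbids `θ` from jumping up, and since
`θ ≤ 0` just before `s` (or `s = 0`, where `η(0-) = 0`), `θ(s) ≤ 0`, a contradiction.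
-/

open Topology

theorem nonpos_of_not_increasing_while_pos {θ : ℝ → ℝ} {t : ℝ} (ht : 0 ≤ t) (h0 : θ 0 ≤ 0)
    (hrun : ∀ s, 0 ≤ s → s ≤ t → (∀ u ∈ Ioc s t, 0 < θ u) → θ t ≤ θ s)
    (hjump : ∀ s ∈ Ioc 0 t, 0 < θ s → ∃ L, Tendsto θ (𝓝[<] s) (𝓝 L) ∧ θ s ≤ L) :
    θ t ≤ 0 := by
  by_contra! hpos
  set A : Set ℝ := {u | 0 ≤ u ∧ u ≤ t ∧ θ u ≤ 0}
  have h0A : (0 : ℝ) ∈ A := ⟨le_rfl, ht, h0⟩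
  have hAbdd : BddAbove A := ⟨t, fun u hu => hu.2.1⟩
  set s := sSup A
  have hs0 : 0 ≤ s := le_csSup hAbdd h0A
  have hst : s ≤ t := csSup_le ⟨0, h0A⟩ fun u hu => hu.2.1
  have hθs : 0 < θ s := by
    refine hpos.trans_le (hrun s hs0 hst fun u ⟨hsu, hut⟩ => ?_)
    by_contra! hu
    exact (le_csSup hAbdd ⟨hs0.trans hsu.le, hut, hu⟩).not_gt hsu
  have hsA : s ∉ A := fun hs => hs.2.2.not_gt hθs
  have hspos : 0 < s := hs0.lt_of_ne fun e => hsA (e ▸ h0A)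
  obtain ⟨L, hL, hθL⟩ := hjump s ⟨hspos, hst⟩ hθs
  have hfreq : ∃ᶠ u in 𝓝[<] s, θ u ≤ 0 := by
    refine frequently_iff.2 fun {U} hU => ?_
    obtain ⟨a, ha, haU⟩ := mem_nhdsLT_iff_exists_Ioo_subset.1 hU
    obtain ⟨u, huA, hau⟩ := exists_lt_of_lt_csSup ⟨0, h0A⟩ ha
    have hus : u < s := (le_csSup hAbdd huA).lt_of_ne (by rintro rfl; exact hsA huA)
    exact ⟨u, haU ⟨hau, hus⟩, huA.2.2⟩
  exact (hθL.trans (le_of_tendsto_of_frequently hL hfreq)).not_gt hθs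

namespace ESPE

variable {l r : ℝ → EReal} {ψ ψ' φ φ' η η' : ℝ → ℝ}

theorem barriers_of_lt (h : ESPE l r ψ φ η) (h' : ESPE l r ψ' φ' η') {u : ℝ} (hu : 0 ≤ u)
    (hlt : φ' u < φ u) : l u < φ u ∧ (φ' u : EReal) < r u := by
  have hcoe : (φ' u : EReal) < φ u := EReal.coe_lt_coe_iff.2 hlt
  exact ⟨(h'.1 u hu).2.1.trans_lt hcoe, hcoe.trans_le (h.1 u hu).2.2⟩

theorem sub_nonpos_at_zero_of_lt (h : ESPE l r ψ φ η) (h' : ESPE l r ψ' φ' η')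
    (hlt : φ' 0 < φ 0) : η 0 - η' 0 ≤ 0 := by
  obtain ⟨hl, hr⟩ := barriers_of_lt h h' le_rfl hlt
  linarith [h.2.2.2.2.2 hl, h'.2.2.2.2.1 hr]

theorem sub_le_of_lt_on_Ioc (h : ESPE l r ψ φ η) (h' : ESPE l r ψ' φ' η') {s t : ℝ}
    (hs : 0 ≤ s) (hst : s ≤ t) (hlt : ∀ u ∈ Ioc s t, φ' u < φ u) :
    η t - η' t ≤ η s - η' s := by
  have hbar := fun u (hu : u ∈ Ioc s t) => barriers_of_lt h h' (hs.trans hu.1.le) (hlt u hu)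
  linarith [h.2.2.1 s t hs hst fun u hsu hut => (hbar u ⟨hsu, hut⟩).1,
    h'.2.1 s t hs hst fun u hsu hut => (hbar u ⟨hsu, hut⟩).2]

theorem sub_le_leftLim_of_lt (h : ESPE l r ψ φ η) (h' : ESPE l r ψ' φ' η') {s : ℝ}
    (hs : 0 < s) (hlt : φ' s < φ s) :
    η s - η' s ≤ Function.leftLim η s - Function.leftLim η' s := by
  obtain ⟨hl, hr⟩ := barriers_of_lt h h' hs.le hlt
  linarith [(h.2.2.2.1 s hs).2 hl, (h'.2.2.2.1 s hs).1 hr]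

theorem phi_sub_eq (h : ESPE l r ψ φ η) (h' : ESPE l r ψ φ' η') {u : ℝ} (hu : 0 ≤ u) :
    φ u - φ' u = η u - η' u := by
  linarith [(h.1 u hu).1, (h'.1 u hu).1]

theorem eta_sub_nonpos (hη : Cadlag η) (hη' : Cadlag η') (h : ESPE l r ψ φ η)
    (h' : ESPE l r ψ φ' η') {t : ℝ} (ht : 0 ≤ t) : η t - η' t ≤ 0 := by
  have hlt : ∀ {u}, 0 ≤ u → 0 < η u - η' u → φ' u < φ u := fun hu hθ => by
    linarith [phi_sub_eq h h' hu]
  refine nonpos_of_not_increasing_while_pos (θ := fun u => η u - η' u) ht ?_ ?_ ?_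
  · by_contra! hθ
    exact (sub_nonpos_at_zero_of_lt h h' (hlt le_rfl hθ)).not_gt hθ
  · exact fun s hs hst hpos => sub_le_of_lt_on_Ioc h h' hs hst fun u hu =>
      hlt (hs.trans hu.1.le) (hpos u hu)
  · rintro s ⟨hs, -⟩ hθ
    obtain ⟨L, hL⟩ := (hη s hs.le).2 hs
    obtain ⟨L', hL'⟩ := (hη' s hs.le).2 hs
    refine ⟨L - L', hL.sub hL', ?_⟩
    rw [← leftLim_eq_of_tendsto hL, ← leftLim_eq_of_tendsto hL']
    exact sub_le_leftLim_of_lt h h' hs (hlt hs.le hθ)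

end ESPE

theorem esp_unique_general (l r : ℝ → EReal)
    (ψ φ φ' η η' : ℝ → ℝ)
    (hη : Cadlag η) (hη' : Cadlag η')
    (h : ESPE l r ψ φ η) (h' : ESPE l r ψ φ' η') :
    ∀ t : ℝ, 0 ≤ t → φ t = φ' t ∧ η t = η' t := by
  intro t ht
  have hη_eq : η t = η' t := by
    linarith [h.eta_sub_nonpos hη hη' h' ht, h'.eta_sub_nonpos hη' hη h ht]
  exact ⟨by linarith [h.phi_sub_eq h' ht], hη_eq⟩

/-- Uniqueness for the extended Skorokhod problem on a time-dependent interval: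
given càdlàg `ℓ ≤ r` (with values in `[-∞,∞)` and `(-∞,∞]` respectively) and càdlàg `ψ`,
any two càdlàg solutions of the ESP coincide on `[0, ∞)`. -/
theorem esp_unique (l r : ℝ → EReal) (hl : CadlagE l) (hr : CadlagE r)
    (hlr : ∀ t : ℝ, 0 ≤ t → l t ≤ r t)
    (hl' : ∀ t : ℝ, 0 ≤ t → l t < ⊤) (hr' : ∀ t : ℝ, 0 ≤ t → ⊥ < r t)
    (ψ φ φ' η η' : ℝ → ℝ) (hψ : Cadlag ψ)
    (hφ : Cadlag φ) (hη : Cadlag η) (hφ' : Cadlag φ') (hη' : Cadlag η')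
    (h : ESPE l r ψ φ η) (h' : ESPE l r ψ φ' η') :
    ∀ t : ℝ, 0 ≤ t → φ t = φ' t ∧ η t = η' t :=
  esp_unique_general l r ψ φ φ' η η' hη hη' h h'
end

section
/- If (φ, η) solves the extended Skorokhod problem on [ℓ(·), r(·)] for ψ and η has finite variation on every bounded interval, then (φ, η) solves the Skorokhod problem on [ℓ(·), r(·)] for ψ, i.e., η decomposes as η_ℓ − η_r with η_ℓ, η_r nondecreasing, η_ℓ increasing only when φ = ℓ and η_r increasing only when φ = r. -/
open Set Filter

/-- `(φ, η)` solves the extended Skorokhod problem (ESP) on the time-dependent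
interval `[ℓ(·), r(·)]` for the input `ψ`. -/
def ESP (l r ψ φ η : ℝ → ℝ) : Prop :=
  (∀ t : ℝ, 0 ≤ t → φ t = ψ t + η t ∧ l t ≤ φ t ∧ φ t ≤ r t) ∧
  (∀ s t : ℝ, 0 ≤ s → s ≤ t → (∀ u, s < u → u ≤ t → φ u < r u) → η s ≤ η t) ∧
  (∀ s t : ℝ, 0 ≤ s → s ≤ t → (∀ u, s < u → u ≤ t → l u < φ u) → η t ≤ η s) ∧
  (∀ t : ℝ, 0 < t →
    (φ t < r t → Function.leftLim η t ≤ η t) ∧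
    (l t < φ t → η t ≤ Function.leftLim η t)) ∧
  ((φ 0 < r 0 → 0 ≤ η 0) ∧ (l 0 < φ 0 → η 0 ≤ 0))

/-- `(φ, η)` together with the pair of nondecreasing right-continuous constraining
processes `(η_ℓ, η_r)` solves the Skorokhod problem (SP) on `[ℓ(·), r(·)]` for `ψ`:
`φ = ψ + η ∈ [ℓ, r]`, `η = η_ℓ - η_r`, and the Lebesgue–Stieltjes measures of
`η_ℓ` and `η_r` do not charge `{φ > ℓ}` and `{φ < r}` respectively. -/
def SPwith (l r ψ φ η : ℝ → ℝ) (ηl ηr : StieltjesFunction ℝ) : Prop :=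
  (∀ t : ℝ, 0 ≤ t → φ t = ψ t + η t ∧ l t ≤ φ t ∧ φ t ≤ r t) ∧
  (∀ t : ℝ, 0 ≤ t → η t = ηl t - ηr t) ∧
  ηl.measure {s : ℝ | 0 ≤ s ∧ l s < φ s} = 0 ∧
  ηr.measure {s : ℝ | 0 ≤ s ∧ φ s < r s} = 0

/-- `(φ, η)` solves the Skorokhod problem on `[ℓ(·), r(·)]` for `ψ`. -/
def SP (l r ψ φ η : ℝ → ℝ) : Prop :=
  ∃ ηl ηr : StieltjesFunction ℝ, SPwith l r ψ φ η ηl ηr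

/-! Write `η = N(-η) - N(η)` with `N(g) = (V(g) - g) / 2`, where `V(g)` is the total variation of
`g` from `0` (and `η` is frozen at `η 0` for negative times). Near a point `s` with `φ s < r s`,
right-continuity keeps `φ < r` on some `[s, b)`, where `η` is nondecreasing, so `N(η)` is constant
there; at `s` itself `V` jumps by `|Δη s| = Δη s ≥ 0`, so `N(η)` does not jump either. Thus the
Stieltjes measure of `N(η)` vanishes on some `[s, b)` around every point of `{φ < r}`, and a set
covered by null right-intervals in this way is null. The same argument applied to `-η` shows that
`N(-η)` does not charge `{ℓ < φ}`. -/

open Function MeasureTheory Topology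

section Variation

variable {α : Type*} [LinearOrder α]

lemma eVariationOn_neg (f : α → ℝ) (s : Set α) : eVariationOn (-f) s = eVariationOn f s := by
  simp only [eVariationOn, Pi.neg_apply, edist_neg_neg]

lemma variationOnFromTo_neg (f : α → ℝ) (s : Set α) (a b : α) :
    variationOnFromTo (-f) s a b = variationOnFromTo f s a b := by
  simp only [variationOnFromTo, eVariationOn_neg]

lemma LocallyBoundedVariationOn.neg {f : α → ℝ} {s : Set α} (hf : LocallyBoundedVariationOn f s) :
    LocallyBoundedVariationOn (-f) s := fun a b ha hb => by
  rw [BoundedVariationOn, eVariationOn_neg]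
  exact hf a b ha hb

end Variation

lemma measure_null_of_forall_exists_Ico_null {α : Type*} [LinearOrder α] [TopologicalSpace α]
    [OrderTopology α] [SecondCountableTopology α] [MeasurableSpace α] (μ : Measure α)
    {A : Set α} (h : ∀ s ∈ A, ∃ b, s < b ∧ μ (Ico s b) = 0) : μ A = 0 := by
  choose! b hsb hb using h
  set U := ⋃ s ∈ A, Ioo s (b s)
  have hU : μ U = 0 := by
    refine measure_null_of_locally_null U fun x hx => ?_
    obtain ⟨s, hs, hx⟩ := mem_iUnion₂.1 hx
    exact ⟨Ioo s (b s), mem_nhdsWithin_of_mem_nhds (isOpen_Ioo.mem_nhds hx),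
      measure_mono_null Ioo_subset_Ico_self (hb s hs)⟩
  -- The intervals `(s, b s)` with `s ∈ A \ U` are pairwise disjoint, hence countably many.
  have hcount : (A \ U).Countable := by
    refine Set.PairwiseDisjoint.countable_of_Ioo (y := b) ?_ fun s hs => hsb s hs.1
    intro s hs s' hs' hne
    wlog hlt : s < s' generalizing s s'
    · exact (this hs' hs hne.symm (lt_of_le_of_ne (not_lt.1 hlt) hne.symm)).symm
    have : b s ≤ s' := not_lt.1 fun h => hs'.2 (mem_biUnion hs.1 ⟨hlt, h⟩)
    exact Set.disjoint_left.2 fun x hx hx' => (hx.2.trans_le this).not_gt hx'.1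
  have hrest : μ (A \ U) = 0 := (measure_null_iff_singleton hcount).2 fun s hs =>
    measure_mono_null (singleton_subset_iff.2 (left_mem_Ico.2 (hsb s hs.1))) (hb s hs.1)
  exact measure_mono_null (subset_union_right.trans union_sdiff_self.symm.subset)
    (measure_union_null hU hrest)

noncomputable def negativeVariation (g : ℝ → ℝ) (t : ℝ) : ℝ :=
  (variationOnFromTo g univ 0 t - g t) / 2

lemma negativeVariation_neg_sub_negativeVariation (g : ℝ → ℝ) (t : ℝ) :
    negativeVariation (-g) t - negativeVariation g t = g t := by
  simp only [negativeVariation, variationOnFromTo_neg, Pi.neg_apply]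
  ring

namespace LocallyBoundedVariationOn

variable {g : ℝ → ℝ}

lemma monotone_negativeVariation (hg : LocallyBoundedVariationOn g univ) :
    Monotone (negativeVariation g) := fun a b hab => by
  have := variationOnFromTo.sub_self_monotoneOn hg (mem_univ 0) (mem_univ a) (mem_univ b) hab
  simp only [negativeVariation, Pi.sub_apply] at this ⊢
  linarith

lemma negativeVariation_eq_of_monotoneOn (hg : LocallyBoundedVariationOn g univ) {a b : ℝ}
    (hab : a ≤ b) (hmono : MonotoneOn g (Icc a b)) :
    negativeVariation g b = negativeVariation g a := by
  have hvar : variationOnFromTo g univ a b = g b - g a := by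
    have ha := left_mem_Icc.2 hab
    have hb := right_mem_Icc.2 hab
    rw [variationOnFromTo.eq_of_le _ _ hab, univ_inter, ← inter_self (Icc a b),
      hmono.eVariationOn_eq ha hb, ENNReal.toReal_ofReal (sub_nonneg.2 (hmono ha hb hab))]
  have := variationOnFromTo.add hg (mem_univ 0) (mem_univ a) (mem_univ b)
  simp only [negativeVariation]
  linarith

lemma leftLim_negativeVariation (hg : LocallyBoundedVariationOn g univ) {s L : ℝ}
    (hL : Tendsto g (𝓝[<] s) (𝓝 L)) (hjump : L ≤ g s) :
    leftLim (negativeVariation g) s = negativeVariation g s := by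
  have hv := variationOnFromTo.tendsto_left (mem_univ 0) (mem_univ s) hg (by rwa [univ_inter])
  rw [univ_inter] at hv
  have hN : negativeVariation g s = (variationOnFromTo g univ 0 s - dist (g s) L - L) / 2 := by
    rw [Real.dist_eq, abs_of_nonneg (sub_nonneg.2 hjump), negativeVariation]
    ring
  exact leftLim_eq_of_tendsto (hN ▸ (hv.sub hL).div_const 2)

lemma continuousWithinAt_negativeVariation (hg : LocallyBoundedVariationOn g univ) {t : ℝ}
    (h : ContinuousWithinAt g (Ici t) t) :
    ContinuousWithinAt (negativeVariation g) (Ici t) t := by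
  have hrc : Tendsto g (𝓝[>] t) (𝓝 (g t)) := h.mono Ioi_subset_Ici_self
  have hv := variationOnFromTo.tendsto_right (mem_univ 0) (mem_univ t) hg (by rwa [univ_inter])
  rw [univ_inter, dist_self, add_zero] at hv
  exact continuousWithinAt_Ioi_iff_Ici.1 ((hv.sub hrc).div_const 2)

end LocallyBoundedVariationOn

noncomputable def negativeVariationStieltjes (g : ℝ → ℝ)
    (hg : LocallyBoundedVariationOn g univ) (hrc : ∀ t, ContinuousWithinAt g (Ici t) t) :
    StieltjesFunction ℝ where
  toFun := negativeVariation g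
  mono' := hg.monotone_negativeVariation
  right_continuous' t := hg.continuousWithinAt_negativeVariation (hrc t)

lemma measure_negativeVariationStieltjes_null {g : ℝ → ℝ}
    (hg : LocallyBoundedVariationOn g univ) (hrc : ∀ t, ContinuousWithinAt g (Ici t) t) {A : Set ℝ}
    (h : ∀ s ∈ A, (∃ L, Tendsto g (𝓝[<] s) (𝓝 L) ∧ L ≤ g s) ∧
      ∃ b, s < b ∧ MonotoneOn g (Ico s b)) :
    (negativeVariationStieltjes g hg hrc).measure A = 0 := by
  refine measure_null_of_forall_exists_Ico_null _ fun s hs => ?_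
  obtain ⟨⟨L, hL, hjump⟩, b, hsb, hmono⟩ := h s hs
  have hconst : ∀ x ∈ Ico s b, negativeVariation g x = negativeVariation g s := fun x hx =>
    hg.negativeVariation_eq_of_monotoneOn hx.1
      (hmono.mono fun y hy => ⟨hy.1, hy.2.trans_lt hx.2⟩)
  have hleft_b : leftLim (negativeVariation g) b = negativeVariation g s :=
    leftLim_eq_of_tendsto (tendsto_const_nhds.congr' (eventuallyEq_of_mem (Ioo_mem_nhdsLT hsb)
      fun x hx => (hconst x ⟨hx.1.le, hx.2⟩).symm))
  refine ⟨b, hsb, ?_⟩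
  rw [StieltjesFunction.measure_Ico]
  change ENNReal.ofReal (leftLim (negativeVariation g) b - leftLim (negativeVariation g) s) = 0
  rw [hleft_b, hg.leftLim_negativeVariation hL hjump, sub_self, ENNReal.ofReal_zero]

lemma ContinuousWithinAt.exists_forall_Ico_lt {α β : Type*} [LinearOrder α] [TopologicalSpace α]
    [OrderTopology α] [NoMaxOrder α] [LinearOrder β] [TopologicalSpace β] [OrderClosedTopology β]
    {f g : α → β} {s : α} (hf : ContinuousWithinAt f (Ici s) s)
    (hg : ContinuousWithinAt g (Ici s) s) (h : f s < g s) :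
    ∃ b, s < b ∧ ∀ u ∈ Ico s b, f u < g u :=
  (mem_nhdsGE_iff_exists_Ico_subset.1 (hf.eventually_lt hg h)).imp fun _ hb => hb

def extendFromZero (f : ℝ → ℝ) (t : ℝ) : ℝ := f (max t 0)

section ExtendFromZero

variable {f : ℝ → ℝ}

lemma extendFromZero_of_nonneg {t : ℝ} (ht : 0 ≤ t) : extendFromZero f t = f t := by
  rw [extendFromZero, max_eq_left ht]

lemma locallyBoundedVariationOn_extendFromZero
    (hf : ∀ T : ℝ, 0 < T → BoundedVariationOn f (Icc 0 T)) :
    LocallyBoundedVariationOn (extendFromZero f) univ := fun a b _ _ => by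
  refine ne_top_of_le_ne_top (hf (max b 1) (lt_max_of_lt_right one_pos)) ?_
  exact eVariationOn.comp_le_of_monotoneOn f _ (fun x _ y _ hxy => max_le_max_right 0 hxy)
    fun x hx => ⟨le_max_right _ _, max_le_max hx.2.2 zero_le_one⟩

lemma Cadlag.continuousWithinAt_extendFromZero (hf : Cadlag f) (t : ℝ) :
    ContinuousWithinAt (extendFromZero f) (Ici t) t :=
  (hf _ (le_max_right t 0)).1.comp (f := fun x => max x 0)
    (continuous_id.max continuous_const).continuousWithinAt fun _ hx =>
      max_le_max_right 0 (mem_Ici.1 hx)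

lemma tendsto_extendFromZero_nhdsLT_zero : Tendsto (extendFromZero f) (𝓝[<] 0) (𝓝 (f 0)) :=
  tendsto_const_nhds.congr' (eventuallyEq_of_mem self_mem_nhdsWithin fun x hx => by
    rw [extendFromZero, max_eq_right (le_of_lt hx)])

lemma Cadlag.tendsto_extendFromZero_nhdsLT (hf : Cadlag f) {t : ℝ} (ht : 0 < t) :
    Tendsto (extendFromZero f) (𝓝[<] t) (𝓝 (leftLim f t)) := by
  obtain ⟨L, hL⟩ := (hf t ht.le).2 ht
  rw [leftLim_eq_of_tendsto hL]
  exact hL.congr' (eventuallyEq_of_mem (Ioo_mem_nhdsLT ht) fun x hx =>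
    (extendFromZero_of_nonneg hx.1.le).symm)

end ExtendFromZero

namespace ESP

variable {l r ψ φ η : ℝ → ℝ}

lemma monotoneOn_extendFromZero (h : ESP l r ψ φ η) {s b : ℝ} (hs : 0 ≤ s)
    (hlt : ∀ u ∈ Ico s b, φ u < r u) :
    MonotoneOn (extendFromZero η) (Ico s b) := fun y hy z hz hyz => by
  rw [extendFromZero_of_nonneg (hs.trans hy.1), extendFromZero_of_nonneg (hs.trans hz.1)]
  exact h.2.1 y z (hs.trans hy.1) hyz fun u hyu huz =>
    hlt u ⟨hy.1.trans hyu.le, huz.trans_lt hz.2⟩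

lemma antitoneOn_extendFromZero (h : ESP l r ψ φ η) {s b : ℝ} (hs : 0 ≤ s)
    (hlt : ∀ u ∈ Ico s b, l u < φ u) :
    AntitoneOn (extendFromZero η) (Ico s b) := fun y hy z hz hyz => by
  rw [extendFromZero_of_nonneg (hs.trans hy.1), extendFromZero_of_nonneg (hs.trans hz.1)]
  exact h.2.2.1 y z (hs.trans hy.1) hyz fun u hyu huz =>
    hlt u ⟨hy.1.trans hyu.le, huz.trans_lt hz.2⟩

lemma exists_tendsto_nhdsLT_le (h : ESP l r ψ φ η) (hη : Cadlag η) {s : ℝ} (hs : 0 ≤ s)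
    (hφr : φ s < r s) :
    ∃ L, Tendsto (extendFromZero η) (𝓝[<] s) (𝓝 L) ∧ L ≤ extendFromZero η s := by
  rcases hs.eq_or_lt with rfl | hs
  · exact ⟨η 0, tendsto_extendFromZero_nhdsLT_zero, (extendFromZero_of_nonneg le_rfl).ge⟩
  · exact ⟨_, hη.tendsto_extendFromZero_nhdsLT hs,
      (extendFromZero_of_nonneg hs.le).symm ▸ (h.2.2.2.1 s hs).1 hφr⟩

lemma exists_tendsto_nhdsLT_ge (h : ESP l r ψ φ η) (hη : Cadlag η) {s : ℝ} (hs : 0 ≤ s)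
    (hlφ : l s < φ s) :
    ∃ L, Tendsto (extendFromZero η) (𝓝[<] s) (𝓝 L) ∧ extendFromZero η s ≤ L := by
  rcases hs.eq_or_lt with rfl | hs
  · exact ⟨η 0, tendsto_extendFromZero_nhdsLT_zero, (extendFromZero_of_nonneg le_rfl).le⟩
  · exact ⟨_, hη.tendsto_extendFromZero_nhdsLT hs,
      (extendFromZero_of_nonneg hs.le).symm ▸ (h.2.2.2.1 s hs).2 hlφ⟩

end ESP

theorem esp_bv_solves_sp_general (l r ψ φ η : ℝ → ℝ)
    (hl : Cadlag l) (hr : Cadlag r)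
    (hφ : Cadlag φ) (hη : Cadlag η)
    (h : ESP l r ψ φ η)
    (hbv : ∀ T : ℝ, 0 < T → BoundedVariationOn η (Set.Icc 0 T)) :
    SP l r ψ φ η := by
  set g := extendFromZero η
  have hg : LocallyBoundedVariationOn g univ := locallyBoundedVariationOn_extendFromZero hbv
  have hrc : ∀ t, ContinuousWithinAt g (Ici t) t := hη.continuousWithinAt_extendFromZero
  refine ⟨negativeVariationStieltjes (-g) hg.neg fun t => (hrc t).neg,
    negativeVariationStieltjes g hg hrc, h.1, fun t ht => ?_, ?_, ?_⟩
  · exact (extendFromZero_of_nonneg ht).symm.trans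
      (negativeVariation_neg_sub_negativeVariation g t).symm
  · refine measure_negativeVariationStieltjes_null _ _ fun s ⟨hs, hlφ⟩ => ⟨?_, ?_⟩
    · obtain ⟨L, hL, hLs⟩ := h.exists_tendsto_nhdsLT_ge hη hs hlφ
      exact ⟨-L, hL.neg, neg_le_neg hLs⟩
    · obtain ⟨b, hsb, hb⟩ := (hl s hs).1.exists_forall_Ico_lt (hφ s hs).1 hlφ
      exact ⟨b, hsb, (h.antitoneOn_extendFromZero hs hb).neg⟩
  · refine measure_negativeVariationStieltjes_null _ _ fun s ⟨hs, hφr⟩ =>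
      ⟨h.exists_tendsto_nhdsLT_le hη hs hφr, ?_⟩
    obtain ⟨b, hsb, hb⟩ := (hφ s hs).1.exists_forall_Ico_lt (hr s hs).1 hφr
    exact ⟨b, hsb, h.monotoneOn_extendFromZero hs hb⟩

/-- If `(φ, η)` solves the extended Skorokhod problem on `[ℓ(·), r(·)]` for `ψ` and `η`
has finite (bounded) variation on every bounded interval, then `(φ, η)` solves the
Skorokhod problem: `η` decomposes as `η_ℓ - η_r` with `η_ℓ, η_r` nondecreasing,
`η_ℓ` increasing only when `φ = ℓ` and `η_r` increasing only when `φ = r`. -/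
theorem esp_bv_solves_sp (l r ψ φ η : ℝ → ℝ)
    (hl : Cadlag l) (hr : Cadlag r) (hlr : ∀ t : ℝ, 0 ≤ t → l t ≤ r t)
    (hψ : Cadlag ψ) (hφ : Cadlag φ) (hη : Cadlag η)
    (h : ESP l r ψ φ η)
    (hbv : ∀ T : ℝ, 0 < T → BoundedVariationOn η (Set.Icc 0 T)) :
    SP l r ψ φ η :=
  esp_bv_solves_sp_general l r ψ φ η hl hr hφ hη h hbv
end

section
/- If inf_{t≥0} (r(t) − ℓ(t)) > 0 and (φ, η) solves the extended Skorokhod problem on [ℓ(·), r(·)] for ψ, then η has finite variation on every bounded time interval, and hence (φ, η) solves the Skorokhod problem on [ℓ(·), r(·)] for ψ. -/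
/-!
Because `r - ℓ ≥ ε > 0`, at every time `t` the path `φ` stays away from one of the two
boundaries on a right neighbourhood `[t, t + δ)` and on a left neighbourhood `(t - δ, t)`, and
on such an interval the ESP makes `η` monotone. Extending each piece as far as possible cuts
`[0, ∞)` into intervals `[s k, s (k + 1))` on which `η` is monotone or antitone; the `s k` cannot
accumulate at a finite `L`, since the greedy step started close enough to `L` would have
swallowed the left neighbourhood of `L`.

Along this partition, `η_ℓ` adds up the upward moves of `η` (inside the pieces and in the jumps
at the `s k`) and `η_r` the downward ones, so `η = η_ℓ - η_r` with both nondecreasing and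
right-continuous. Where `φ > ℓ`, `η` does not jump up and is nonincreasing just after, so `η_ℓ`
is locally constant to the right and continuous from the left there; the countability of points
isolated on the right then shows that the Stieltjes measure of `η_ℓ` does not charge `{φ > ℓ}`.
The same argument applied to `-η` handles `η_r`.
-/

open Set Filter

open Function Topology MeasureTheory

theorem BoundedVariationOn.sub {α : Type*} [LinearOrder α] {f g : α → ℝ} {S : Set α}
    (hf : BoundedVariationOn f S) (hg : BoundedVariationOn g S) :
    BoundedVariationOn (f - g) S := by
  refine ne_top_of_le_ne_top (ENNReal.add_ne_top.2 ⟨hf, hg⟩) (iSup_le fun ⟨n, u, hu, us⟩ => ?_)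
  calc ∑ i ∈ Finset.range n, edist ((f - g) (u (i + 1))) ((f - g) (u i))
      ≤ ∑ i ∈ Finset.range n,
          (edist (f (u (i + 1))) (f (u i)) + edist (g (u (i + 1))) (g (u i))) := by
        gcongr with i
        rw [Pi.sub_apply, Pi.sub_apply, edist_eq_enorm_sub, edist_eq_enorm_sub,
          edist_eq_enorm_sub, sub_sub_sub_comm]
        exact enorm_sub_le
    _ = _ := Finset.sum_add_distrib
    _ ≤ eVariationOn f S + eVariationOn g S :=
        add_le_add (eVariationOn.sum_le hu us) (eVariationOn.sum_le hu us)

theorem measure_null_of_forall_exists_Ico {μ : Measure ℝ} {A : Set ℝ}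
    (h : ∀ t ∈ A, ∃ b > t, μ (Ico t b) = 0) : μ A = 0 := by
  choose! b hb hμ using h
  have hU : μ (⋃ t : A, Ioo (t : ℝ) (b t)) = 0 := by
    obtain ⟨T, hT, hTU⟩ := TopologicalSpace.isOpen_iUnion_countable
      (fun t : A => Ioo (t : ℝ) (b t)) fun _ => isOpen_Ioo
    rw [← hTU, measure_biUnion_null_iff hT]
    exact fun t _ => measure_mono_null Ioo_subset_Ico_self (hμ t t.2)
  set U := ⋃ t : A, Ioo (t : ℝ) (b t)
  -- each point of `A \ U` is isolated on the right in `A \ U`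
  have hcount : (A \ U).Countable := by
    refine (countable_setOfPred_isolated_right_within (s := A \ U)).mono fun t ht => ?_
    refine ⟨ht, ?_⟩
    rw [← empty_mem_iff_bot, mem_nhdsWithin]
    exact ⟨Iio (b t), isOpen_Iio, hb t ht.1,
      fun u hu => hu.2.1.2 (mem_iUnion.2 ⟨⟨t, ht.1⟩, hu.2.2, hu.1⟩)⟩
  have hrest : μ (A \ U) = 0 := by
    rw [← biUnion_of_singleton (A \ U), measure_biUnion_null_iff hcount]
    exact fun t ht => measure_mono_null
      (singleton_subset_iff.2 (show t ∈ Ico t (b t) from ⟨le_rfl, hb t ht.1⟩)) (hμ t ht.1)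
  exact measure_mono_null (fun t ht => (em (t ∈ U)).imp id (⟨ht, ·⟩))
    (measure_union_null hU hrest)

theorem StieltjesFunction.exists_measure_Ico_eq_zero (F : StieltjesFunction ℝ) {t : ℝ}
    (hleft : leftLim F t = F t) (hright : ∀ᶠ u in 𝓝[≥] t, F u = F t) :
    ∃ b > t, F.measure (Ico t b) = 0 := by
  obtain ⟨b, hb, hsub⟩ := mem_nhdsGE_iff_exists_Ico_subset.1 hright
  have hb_left : leftLim F b = F t := leftLim_eq_of_tendsto <| tendsto_const_nhds.congr' <| by
    filter_upwards [Ioo_mem_nhdsLT hb] with u hu using (hsub ⟨hu.1.le, hu.2⟩).symm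
  exact ⟨b, hb, by rw [F.measure_Ico, hb_left, hleft, sub_self, ENNReal.ofReal_zero]⟩

theorem posPart_neg_sub_neg (a b : ℝ) : (-a - -b)⁺ = (a - b)⁻ := by
  rw [← posPart_neg, neg_sub_neg, neg_sub]

section Cadlag

variable {f g : ℝ → ℝ} {t : ℝ}

theorem Cadlag.tendsto_leftLim (hf : Cadlag f) (ht : 0 < t) :
    Tendsto f (𝓝[<] t) (𝓝 (leftLim f t)) := by
  obtain ⟨y, hy⟩ := (hf t ht.le).2 ht
  rwa [leftLim_eq_of_tendsto hy]

theorem Cadlag.neg (hf : Cadlag f) : Cadlag (-f) := fun t ht =>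
  ⟨(hf t ht).1.neg, fun ht' => let ⟨y, hy⟩ := (hf t ht).2 ht'; ⟨-y, hy.neg⟩⟩

theorem Cadlag.leftLim_neg (hf : Cadlag f) (ht : 0 < t) : leftLim (-f) t = -leftLim f t :=
  leftLim_eq_of_tendsto (hf.tendsto_leftLim ht).neg

theorem Cadlag.exists_Ico_lt (hf : Cadlag f) (hg : Cadlag g) (ht : 0 ≤ t) (h : f t < g t) :
    ∃ b > t, ∀ u ∈ Ico t b, f u < g u :=
  mem_nhdsGE_iff_exists_Ico_subset.1 ((hf t ht).1.eventually_lt (hg t ht).1 h)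

theorem Cadlag.exists_Ioo_lt (hf : Cadlag f) (hg : Cadlag g) (ht : 0 < t)
    (h : leftLim f t < leftLim g t) : ∃ a < t, ∀ u ∈ Ioo a t, f u < g u :=
  mem_nhdsLT_iff_exists_Ioo_subset.1
    ((hf.tendsto_leftLim ht).eventually_lt (hg.tendsto_leftLim ht) h)

end Cadlag

def MonotoneOrAntitoneOn {α β : Type*} [Preorder α] [Preorder β] (f : α → β) (S : Set α) :
    Prop :=
  MonotoneOn f S ∨ AntitoneOn f S

namespace MonotoneOrAntitoneOn

variable {α : Type*} [LinearOrder α] {f : α → ℝ} {S T : Set α}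

theorem mono (h : MonotoneOrAntitoneOn f S) (hTS : T ⊆ S) : MonotoneOrAntitoneOn f T :=
  h.imp (·.mono hTS) (·.mono hTS)

theorem neg (h : MonotoneOrAntitoneOn f S) : MonotoneOrAntitoneOn (-f) S :=
  h.symm.imp AntitoneOn.neg MonotoneOn.neg

theorem posPart_sub_monotoneOn (h : MonotoneOrAntitoneOn f S) {a : α} (ha : IsLeast S a) :
    MonotoneOn (fun x => (f x - f a)⁺) S := by
  rcases h with h | h
  · exact fun x hx y hy hxy => posPart_mono (sub_le_sub_right (h hx hy hxy) _)
  · intro x hx y _ _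
    show (f x - f a)⁺ ≤ (f y - f a)⁺
    rw [posPart_eq_zero.2 (sub_nonpos.2 (h ha.1 hx (ha.2 hx)))]
    exact posPart_nonneg _

theorem Ico_of_forall_lt [DenselyOrdered α] {a c : α}
    (h : ∀ b < c, MonotoneOrAntitoneOn f (Ico a b)) : MonotoneOrAntitoneOn f (Ico a c) := by
  by_contra hne
  simp only [MonotoneOrAntitoneOn, MonotoneOn, AntitoneOn, not_or, not_forall, not_le] at hne
  obtain ⟨⟨x, hx, y, hy, hxy, hyx⟩, ⟨x', hx', y', hy', hxy', hxy''⟩⟩ := hne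
  obtain ⟨b, hb, hbc⟩ := exists_between (max_lt hy.2 hy'.2)
  have mem {z} (hz : z ∈ Ico a c) (hzy : z ≤ max y y') : z ∈ Ico a b := ⟨hz.1, hzy.trans_lt hb⟩
  rcases h b hbc with hmono | hanti
  · exact (hmono (mem hx (hxy.trans (le_max_left _ _))) (mem hy (le_max_left _ _)) hxy).not_gt hyx
  · exact (hanti (mem hx' (hxy'.trans (le_max_right _ _))) (mem hy' (le_max_right _ _))
      hxy').not_gt hxy''

end MonotoneOrAntitoneOn

structure IsMonotonePartition (f : ℝ → ℝ) (s : ℕ → ℝ) : Prop where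
  zero : s 0 = 0
  strictMono : StrictMono s
  tendsto_atTop : Tendsto s atTop atTop
  monotoneOrAntitoneOn : ∀ k, MonotoneOrAntitoneOn f (Ico (s k) (s (k + 1)))

section GreedyPartition

variable {f : ℝ → ℝ}

noncomputable def greedyStep (f : ℝ → ℝ) (a : ℝ) : ℝ :=
  sSup {b | b ∈ Ioc a (a + 1) ∧ MonotoneOrAntitoneOn f (Ico a b)}

theorem greedyStep_spec {a : ℝ} (h : ∃ b > a, MonotoneOrAntitoneOn f (Ico a b)) :
    greedyStep f a ∈ Ioc a (a + 1) ∧ MonotoneOrAntitoneOn f (Ico a (greedyStep f a)) ∧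
      ∀ b ∈ Ioc a (a + 1), MonotoneOrAntitoneOn f (Ico a b) → b ≤ greedyStep f a := by
  set S := {b | b ∈ Ioc a (a + 1) ∧ MonotoneOrAntitoneOn f (Ico a b)}
  obtain ⟨b, hb, hmoa⟩ := h
  have hne : S.Nonempty := ⟨min b (a + 1), ⟨lt_min hb (lt_add_one a), min_le_right _ _⟩,
    hmoa.mono (Ico_subset_Ico_right (min_le_left _ _))⟩
  have hbdd : BddAbove S := ⟨a + 1, fun _ hc => hc.1.2⟩
  refine ⟨⟨hne.some_mem.1.1.trans_le (le_csSup hbdd hne.some_mem),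
    csSup_le hne fun _ hc => hc.1.2⟩, ?_, fun c hc hmoa => le_csSup hbdd ⟨hc, hmoa⟩⟩
  refine MonotoneOrAntitoneOn.Ico_of_forall_lt fun c hc => ?_
  obtain ⟨d, hd, hcd⟩ := exists_lt_of_lt_csSup hne hc
  exact hd.2.mono (Ico_subset_Ico_right hcd.le)

noncomputable def greedySeq (f : ℝ → ℝ) : ℕ → ℝ
  | 0 => 0
  | k + 1 => greedyStep f (greedySeq f k)

theorem isMonotonePartition_greedySeq
    (hright : ∀ t, 0 ≤ t → ∃ b > t, MonotoneOrAntitoneOn f (Ico t b))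
    (hleft : ∀ t, 0 < t → ∃ a < t, MonotoneOrAntitoneOn f (Ico a t)) :
    IsMonotonePartition f (greedySeq f) := by
  set s := greedySeq f
  have hnonneg : ∀ k, 0 ≤ s k := by
    intro k
    induction k with
    | zero => exact le_rfl
    | succ k ih => exact ih.trans (greedyStep_spec (hright _ ih)).1.1.le
  have hstep k : s (k + 1) ∈ Ioc (s k) (s k + 1) ∧
      MonotoneOrAntitoneOn f (Ico (s k) (s (k + 1))) ∧
      ∀ b ∈ Ioc (s k) (s k + 1), MonotoneOrAntitoneOn f (Ico (s k) b) → b ≤ s (k + 1) :=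
    greedyStep_spec (hright _ (hnonneg k))
  have hmono : StrictMono s := strictMono_nat_of_lt_succ fun k => (hstep k).1.1
  refine ⟨rfl, hmono, ?_, fun k => (hstep k).2.1⟩
  rcases tendsto_atTop_of_monotone hmono.monotone with h | ⟨L, hL⟩
  · exact h
  have hlt k : s k < L := (hmono k.lt_succ_self).trans_le (hmono.monotone.ge_of_tendsto hL _)
  obtain ⟨a, haL, ha⟩ := hleft L ((hnonneg 0).trans_lt (hlt 0))
  obtain ⟨k, hk⟩ := (hL.eventually (lt_mem_nhds (max_lt haL (sub_one_lt L)))).exists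
  have hL_le : L ≤ s (k + 1) := (hstep k).2.2 L
    ⟨hlt k, by linarith [le_max_right a (L - 1)]⟩
    (ha.mono (Ico_subset_Ico_left ((le_max_left _ _).trans hk.le)))
  exact ((hlt (k + 1)).not_ge hL_le).elim

end GreedyPartition

/-- The value at `s k` of the increasing part of `f` along `s`: `f 0`⁺ plus the upward moves of
`f` inside the pieces `[s j, s (j + 1))` and in the jumps at `s (j + 1)`, for `j < k`. -/
noncomputable def increasingPartSeq (f : ℝ → ℝ) (s : ℕ → ℝ) : ℕ → ℝ
  | 0 => (f 0)⁺
  | k + 1 => increasingPartSeq f s k + (leftLim f (s (k + 1)) - f (s k))⁺ +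
      (f (s (k + 1)) - leftLim f (s (k + 1)))⁺

theorem increasingPartSeq_monotone (f : ℝ → ℝ) (s : ℕ → ℝ) :
    Monotone (increasingPartSeq f s) :=
  monotone_nat_of_le_succ fun _ =>
    (le_add_of_nonneg_right (posPart_nonneg _)).trans (le_add_of_nonneg_right (posPart_nonneg _))

namespace IsMonotonePartition

variable {f : ℝ → ℝ} {s : ℕ → ℝ} {t x : ℝ} {m : ℕ}

theorem nonneg (hs : IsMonotonePartition f s) (k : ℕ) : 0 ≤ s k :=
  hs.zero ▸ hs.strictMono.monotone (Nat.zero_le k)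

theorem neg (hs : IsMonotonePartition f s) : IsMonotonePartition (-f) s :=
  { hs with monotoneOrAntitoneOn := fun k => (hs.monotoneOrAntitoneOn k).neg }

theorem exists_lt_succ (hs : IsMonotonePartition f s) (t : ℝ) : ∃ m, t < s (m + 1) :=
  ((hs.tendsto_atTop.comp (tendsto_add_atTop_nat 1)).eventually_gt_atTop t).exists

open scoped Classical in
/-- The index `m` of the piece `[s m, s (m + 1))` containing `t ≥ 0`; it is `0` for `t < 0`. -/
noncomputable def idx (hs : IsMonotonePartition f s) (t : ℝ) : ℕ :=
  Nat.find (hs.exists_lt_succ t)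

theorem lt_idx_succ (hs : IsMonotonePartition f s) : t < s (hs.idx t + 1) :=
  Nat.find_spec (hs.exists_lt_succ t)

theorem idx_mono (hs : IsMonotonePartition f s) : Monotone hs.idx :=
  fun _ _ hxy => Nat.find_mono fun _ hm => hxy.trans_lt hm

theorem idx_of_nonpos (hs : IsMonotonePartition f s) (ht : t ≤ 0) : hs.idx t = 0 :=
  (Nat.find_eq_zero _).2 (ht.trans_lt (hs.zero ▸ hs.strictMono zero_lt_one))

theorem idx_eq (hs : IsMonotonePartition f s) (h₁ : s m ≤ t) (h₂ : t < s (m + 1)) :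
    hs.idx t = m := by
  refine le_antisymm (Nat.find_min' _ h₂) (not_lt.1 fun hlt => ?_)
  exact lt_irrefl t (hs.lt_idx_succ.trans_le ((hs.strictMono.monotone hlt).trans h₁))

theorem mem_Ico_idx (hs : IsMonotonePartition f s) (ht : 0 ≤ t) :
    t ∈ Ico (s (hs.idx t)) (s (hs.idx t + 1)) := by
  refine ⟨?_, hs.lt_idx_succ⟩
  rcases h : hs.idx t with _ | m
  · simpa [hs.zero] using ht
  · exact not_lt.1 (Nat.find_min (hs.exists_lt_succ t) (by simp only [idx] at h; omega))

theorem exists_mem_Ioc (hs : IsMonotonePartition f s) (ht : 0 < t) :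
    ∃ m, t ∈ Ioc (s m) (s (m + 1)) := by
  obtain ⟨h₁, h₂⟩ := hs.mem_Ico_idx ht.le
  rcases h₁.lt_or_eq with h₁ | h₁
  · exact ⟨_, h₁, h₂.le⟩
  obtain ⟨m, hm⟩ := Nat.exists_eq_succ_of_ne_zero (n := hs.idx t) fun h0 => by
    rw [h0, hs.zero] at h₁
    exact ht.ne h₁
  rw [hm] at h₁
  exact ⟨m, (hs.strictMono m.lt_succ_self).trans_eq h₁, h₁.ge⟩

/-- Evaluating `f` at `max t 0` makes the increasing part constant on `(-∞, 0]`. -/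
noncomputable def increasingPart (hs : IsMonotonePartition f s) (t : ℝ) : ℝ :=
  increasingPartSeq f s (hs.idx t) + (f (max t 0) - f (s (hs.idx t)))⁺

theorem increasingPart_of_mem_Ico (hs : IsMonotonePartition f s)
    (ht : t ∈ Ico (s m) (s (m + 1))) :
    hs.increasingPart t = increasingPartSeq f s m + (f t - f (s m))⁺ := by
  rw [increasingPart, hs.idx_eq ht.1 ht.2, max_eq_left ((hs.nonneg m).trans ht.1)]

theorem increasingPart_seq (hs : IsMonotonePartition f s) (m : ℕ) :
    hs.increasingPart (s m) = increasingPartSeq f s m := by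
  rw [hs.increasingPart_of_mem_Ico ⟨le_rfl, hs.strictMono m.lt_succ_self⟩, sub_self,
    posPart_zero, add_zero]

theorem increasingPart_of_nonpos (hs : IsMonotonePartition f s) (ht : t ≤ 0) :
    hs.increasingPart t = (f 0)⁺ := by
  rw [increasingPart, hs.idx_of_nonpos ht, max_eq_right ht, hs.zero, sub_self, posPart_zero,
    add_zero, increasingPartSeq]

theorem increasingPart_max_zero (hs : IsMonotonePartition f s) (t : ℝ) :
    hs.increasingPart (max t 0) = hs.increasingPart t := by
  rcases le_total t 0 with ht | ht
  · rw [max_eq_right ht, hs.increasingPart_of_nonpos le_rfl, hs.increasingPart_of_nonpos ht]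
  · rw [max_eq_left ht]

theorem monotoneOn_increasingPart_Ico (hs : IsMonotonePartition f s) (m : ℕ) :
    MonotoneOn hs.increasingPart (Ico (s m) (s (m + 1))) := by
  intro x hx y hy hxy
  rw [hs.increasingPart_of_mem_Ico hx, hs.increasingPart_of_mem_Ico hy]
  exact (add_le_add_iff_left _).2 ((hs.monotoneOrAntitoneOn m).posPart_sub_monotoneOn
    (isLeast_Ico (hs.strictMono m.lt_succ_self)) hx hy hxy)

theorem tendsto_increasingPart_nhdsLT (hs : IsMonotonePartition f s) (hf : Cadlag f)
    (ht : t ∈ Ioc (s m) (s (m + 1))) :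
    Tendsto hs.increasingPart (𝓝[<] t)
      (𝓝 (increasingPartSeq f s m + (leftLim f t - f (s m))⁺)) := by
  refine (tendsto_const_nhds.add ((((hf.tendsto_leftLim ((hs.nonneg m).trans_lt ht.1)).sub_const
    _).max tendsto_const_nhds))).congr' ?_
  filter_upwards [Ioo_mem_nhdsLT ht.1] with u hu
  exact (hs.increasingPart_of_mem_Ico ⟨hu.1.le, hu.2.trans_le ht.2⟩).symm

theorem increasingPart_le_seq_succ (hs : IsMonotonePartition f s) (hf : Cadlag f)
    (hx : x ∈ Ico (s m) (s (m + 1))) : hs.increasingPart x ≤ increasingPartSeq f s (m + 1) := by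
  have hlim := hs.tendsto_increasingPart_nhdsLT hf ⟨hs.strictMono m.lt_succ_self, le_rfl⟩
  have hle : hs.increasingPart x ≤
      increasingPartSeq f s m + (leftLim f (s (m + 1)) - f (s m))⁺ := by
    refine ge_of_tendsto hlim ?_
    filter_upwards [Ioo_mem_nhdsLT hx.2] with u hu
    exact hs.monotoneOn_increasingPart_Ico m hx ⟨hx.1.trans hu.1.le, hu.2⟩ hu.1.le
  rw [increasingPartSeq]
  linarith [posPart_nonneg (f (s (m + 1)) - leftLim f (s (m + 1)))]

theorem monotone_increasingPart (hs : IsMonotonePartition f s) (hf : Cadlag f) :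
    Monotone hs.increasingPart := by
  have hmono : MonotoneOn hs.increasingPart (Ici 0) := by
    intro x hx y hy hxy
    have hx' := hs.mem_Ico_idx hx
    have hy' := hs.mem_Ico_idx hy
    rcases (hs.idx_mono hxy).lt_or_eq with hlt | heq
    · calc hs.increasingPart x ≤ increasingPartSeq f s (hs.idx x + 1) :=
            hs.increasingPart_le_seq_succ hf hx'
        _ ≤ increasingPartSeq f s (hs.idx y) := increasingPartSeq_monotone f s hlt
        _ = hs.increasingPart (s (hs.idx y)) := (hs.increasingPart_seq _).symm
        _ ≤ hs.increasingPart y := hs.monotoneOn_increasingPart_Ico _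
            ⟨le_rfl, hy'.1.trans_lt hy'.2⟩ hy' hy'.1
    · rw [heq] at hx'
      exact hs.monotoneOn_increasingPart_Ico _ hx' hy' hxy
  intro x y hxy
  rw [← hs.increasingPart_max_zero x, ← hs.increasingPart_max_zero y]
  exact hmono (mem_Ici.2 (le_max_right _ _)) (mem_Ici.2 (le_max_right _ _))
    (max_le_max_right 0 hxy)

theorem increasingPart_eventuallyEq (hs : IsMonotonePartition f s) (ht : 0 ≤ t) :
    hs.increasingPart =ᶠ[𝓝[≥] t]
      fun u => increasingPartSeq f s (hs.idx t) + (f u - f (s (hs.idx t)))⁺ := by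
  have h := hs.mem_Ico_idx ht
  filter_upwards [Ico_mem_nhdsGE h.2] with u hu
  exact hs.increasingPart_of_mem_Ico ⟨h.1.trans hu.1, hu.2⟩

theorem continuousWithinAt_increasingPart (hs : IsMonotonePartition f s) (hf : Cadlag f)
    (t : ℝ) : ContinuousWithinAt hs.increasingPart (Ici t) t := by
  rcases lt_or_ge t 0 with ht | ht
  · refine (continuousWithinAt_const (b := (f 0)⁺)).congr_of_eventuallyEq_of_mem ?_
      self_mem_Ici
    filter_upwards [mem_nhdsWithin_of_mem_nhds (Iio_mem_nhds ht)] with u hu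
    exact hs.increasingPart_of_nonpos hu.le
  · exact (continuousWithinAt_const.add (((hf t ht).1.sub continuousWithinAt_const).max
      continuousWithinAt_const)).congr_of_eventuallyEq_of_mem (hs.increasingPart_eventuallyEq ht)
      self_mem_Ici

noncomputable def increasingPartStieltjes (hs : IsMonotonePartition f s) (hf : Cadlag f) :
    StieltjesFunction ℝ where
  toFun := hs.increasingPart
  mono' := hs.monotone_increasingPart hf
  right_continuous' := hs.continuousWithinAt_increasingPart hf

theorem increasingPartSeq_sub_neg (hs : IsMonotonePartition f s) (hf : Cadlag f) (k : ℕ) :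
    increasingPartSeq f s k - increasingPartSeq (-f) s k = f (s k) := by
  induction k with
  | zero => simp [increasingPartSeq, hs.zero, posPart_sub_negPart]
  | succ k ih =>
    simp only [increasingPartSeq, Pi.neg_apply,
      hf.leftLim_neg ((hs.nonneg k).trans_lt (hs.strictMono k.lt_succ_self)), posPart_neg_sub_neg]
    linarith [posPart_sub_negPart (leftLim f (s (k + 1)) - f (s k)),
      posPart_sub_negPart (f (s (k + 1)) - leftLim f (s (k + 1)))]

theorem increasingPart_sub_neg (hs : IsMonotonePartition f s) (hf : Cadlag f) (ht : 0 ≤ t) :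
    hs.increasingPart t - hs.neg.increasingPart t = f t := by
  have h := hs.mem_Ico_idx ht
  rw [hs.increasingPart_of_mem_Ico h, hs.neg.increasingPart_of_mem_Ico h, Pi.neg_apply,
    Pi.neg_apply, posPart_neg_sub_neg]
  linarith [hs.increasingPartSeq_sub_neg hf (hs.idx t),
    posPart_sub_negPart (f t - f (s (hs.idx t)))]

theorem leftLim_increasingPart (hs : IsMonotonePartition f s) (hf : Cadlag f) (ht : 0 ≤ t)
    (hjump : 0 < t → f t ≤ leftLim f t) :
    leftLim hs.increasingPart t = hs.increasingPart t := by
  rcases ht.eq_or_lt with rfl | ht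
  · rw [hs.increasingPart_of_nonpos le_rfl]
    refine leftLim_eq_of_tendsto (tendsto_const_nhds.congr' ?_)
    filter_upwards [self_mem_nhdsWithin] with u hu using (hs.increasingPart_of_nonpos hu.le).symm
  obtain ⟨m, hm⟩ := hs.exists_mem_Ioc ht
  refine le_antisymm ((hs.monotone_increasingPart hf).leftLim_le le_rfl) ?_
  rw [leftLim_eq_of_tendsto (hs.tendsto_increasingPart_nhdsLT hf hm)]
  rcases hm.2.lt_or_eq with hlt | rfl
  · rw [hs.increasingPart_of_mem_Ico ⟨hm.1.le, hlt⟩]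
    exact (add_le_add_iff_left _).2 (posPart_mono (sub_le_sub_right (hjump ht) _))
  · rw [hs.increasingPart_seq, increasingPartSeq, posPart_eq_zero.2 (sub_nonpos.2 (hjump ht)),
      add_zero]

theorem increasingPart_eventually_eq (hs : IsMonotonePartition f s) (ht : 0 ≤ t)
    (hanti : ∃ b > t, AntitoneOn f (Ico t b)) :
    ∀ᶠ u in 𝓝[≥] t, hs.increasingPart u = hs.increasingPart t := by
  obtain ⟨b, hb, hanti⟩ := hanti
  have h := hs.mem_Ico_idx ht
  have hmono := (hs.monotoneOrAntitoneOn (hs.idx t)).posPart_sub_monotoneOn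
    (isLeast_Ico (h.1.trans_lt h.2))
  filter_upwards [hs.increasingPart_eventuallyEq ht, Ico_mem_nhdsGE h.2, Ico_mem_nhdsGE hb]
    with u hu hu₁ hu₂
  rw [hu, hs.increasingPart_of_mem_Ico h]
  refine congrArg _ (le_antisymm ?_ (hmono h ⟨h.1.trans hu₁.1, hu₁.2⟩ hu₁.1))
  exact posPart_mono (sub_le_sub_right (hanti ⟨le_rfl, hb⟩ hu₂ hu₂.1) _)

theorem measure_increasingPartStieltjes_eq_zero (hs : IsMonotonePartition f s) (hf : Cadlag f)
    {A : Set ℝ} (hA : ∀ t ∈ A, 0 ≤ t ∧ (∃ b > t, AntitoneOn f (Ico t b)) ∧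
      (0 < t → f t ≤ leftLim f t)) :
    (hs.increasingPartStieltjes hf).measure A = 0 :=
  measure_null_of_forall_exists_Ico fun t ht =>
    let ⟨ht₀, hanti, hjump⟩ := hA t ht
    StieltjesFunction.exists_measure_Ico_eq_zero _ (hs.leftLim_increasingPart hf ht₀ hjump)
      (hs.increasingPart_eventually_eq ht₀ hanti)

end IsMonotonePartition

section ESP

variable {l r ψ φ η : ℝ → ℝ} {t : ℝ}

theorem ESP.monotoneOn_Ico (h : ESP l r ψ φ η) {a b : ℝ} (ha : 0 ≤ a)
    (hφr : ∀ u ∈ Ioo a b, φ u < r u) : MonotoneOn η (Ico a b) :=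
  fun x hx y hy hxy => h.2.1 x y (ha.trans hx.1) hxy fun u hxu huy =>
    hφr u ⟨hx.1.trans_lt hxu, huy.trans_lt hy.2⟩

theorem ESP.antitoneOn_Ico (h : ESP l r ψ φ η) {a b : ℝ} (ha : 0 ≤ a)
    (hlφ : ∀ u ∈ Ioo a b, l u < φ u) : AntitoneOn η (Ico a b) :=
  fun x hx y hy hxy => h.2.2.1 x y (ha.trans hx.1) hxy fun u hxu huy =>
    hlφ u ⟨hx.1.trans_lt hxu, huy.trans_lt hy.2⟩

theorem ESP.exists_monotoneOn_Ico (h : ESP l r ψ φ η) (hφ : Cadlag φ) (hr : Cadlag r)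
    (ht : 0 ≤ t) (hφr : φ t < r t) : ∃ b > t, MonotoneOn η (Ico t b) :=
  let ⟨b, hb, hlt⟩ := hφ.exists_Ico_lt hr ht hφr
  ⟨b, hb, h.monotoneOn_Ico ht fun u hu => hlt u (Ioo_subset_Ico_self hu)⟩

theorem ESP.exists_antitoneOn_Ico (h : ESP l r ψ φ η) (hl : Cadlag l) (hφ : Cadlag φ)
    (ht : 0 ≤ t) (hlφ : l t < φ t) : ∃ b > t, AntitoneOn η (Ico t b) :=
  let ⟨b, hb, hlt⟩ := hl.exists_Ico_lt hφ ht hlφ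
  ⟨b, hb, h.antitoneOn_Ico ht fun u hu => hlt u (Ioo_subset_Ico_self hu)⟩

theorem ESP.exists_isMonotonePartition (h : ESP l r ψ φ η) (hl : Cadlag l) (hr : Cadlag r)
    (hφ : Cadlag φ) (hsep : ∃ ε : ℝ, 0 < ε ∧ ∀ t : ℝ, 0 ≤ t → ε ≤ r t - l t) :
    ∃ s, IsMonotonePartition η s := by
  obtain ⟨ε, hε, hsep⟩ := hsep
  refine ⟨_, isMonotonePartition_greedySeq (fun t ht => ?_) (fun t ht => ?_)⟩
  · rcases lt_or_ge (φ t) (r t) with hφr | hrφ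
    · obtain ⟨b, hb, hmono⟩ := h.exists_monotoneOn_Ico hφ hr ht hφr
      exact ⟨b, hb, .inl hmono⟩
    · obtain ⟨b, hb, hanti⟩ := h.exists_antitoneOn_Ico hl hφ ht (by linarith [hsep t ht])
      exact ⟨b, hb, .inr hanti⟩
  · have hgap : ε ≤ leftLim r t - leftLim l t := by
      refine ge_of_tendsto ((hr.tendsto_leftLim ht).sub (hl.tendsto_leftLim ht)) ?_
      filter_upwards [Ioo_mem_nhdsLT ht] with u hu using hsep u hu.1.le
    rcases lt_or_ge (leftLim φ t) (leftLim r t) with hφr | hrφ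
    · obtain ⟨a, ha, hlt⟩ := hφ.exists_Ioo_lt hr ht hφr
      exact ⟨max a 0, max_lt ha ht, .inl (h.monotoneOn_Ico (le_max_right _ _) fun u hu =>
        hlt u ⟨(le_max_left _ _).trans_lt hu.1, hu.2⟩)⟩
    · obtain ⟨a, ha, hlt⟩ := hl.exists_Ioo_lt hφ ht (by linarith)
      exact ⟨max a 0, max_lt ha ht, .inr (h.antitoneOn_Ico (le_max_right _ _) fun u hu =>
        hlt u ⟨(le_max_left _ _).trans_lt hu.1, hu.2⟩)⟩

end ESP

theorem esp_separated_solves_sp_general (l r ψ φ η : ℝ → ℝ)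
    (hl : Cadlag l) (hr : Cadlag r)
    (hsep : ∃ ε : ℝ, 0 < ε ∧ ∀ t : ℝ, 0 ≤ t → ε ≤ r t - l t)
    (hφ : Cadlag φ) (hη : Cadlag η)
    (h : ESP l r ψ φ η) :
    (∀ T : ℝ, 0 < T → BoundedVariationOn η (Set.Icc 0 T)) ∧ SP l r ψ φ η := by
  obtain ⟨s, hs⟩ := h.exists_isMonotonePartition hl hr hφ hsep
  set ηl := hs.increasingPartStieltjes hη
  set ηr := hs.neg.increasingPartStieltjes hη.neg
  have hdecomp : ∀ t, 0 ≤ t → η t = ηl t - ηr t :=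
    fun t ht => (hs.increasingPart_sub_neg hη ht).symm
  have hbv (F : StieltjesFunction ℝ) (T : ℝ) : BoundedVariationOn F (Icc 0 T) := by
    simpa using (F.mono.monotoneOn univ).locallyBoundedVariationOn 0 T trivial trivial
  refine ⟨fun T _ => ?_, ηl, ηr, h.1, hdecomp, ?_, ?_⟩
  · rw [BoundedVariationOn, eVariationOn.eq_of_eqOn fun t ht => hdecomp t ht.1]
    exact (hbv ηl T).sub (hbv ηr T)
  · exact hs.measure_increasingPartStieltjes_eq_zero hη fun t ⟨ht, hlφ⟩ =>
      ⟨ht, h.exists_antitoneOn_Ico hl hφ ht hlφ, fun ht' => (h.2.2.2.1 t ht').2 hlφ⟩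
  · refine hs.neg.measure_increasingPartStieltjes_eq_zero hη.neg fun t ⟨ht, hφr⟩ => ⟨ht, ?_, ?_⟩
    · obtain ⟨b, hb, hmono⟩ := h.exists_monotoneOn_Ico hφ hr ht hφr
      exact ⟨b, hb, hmono.neg⟩
    · intro ht'
      rw [hη.leftLim_neg ht', Pi.neg_apply, neg_le_neg_iff]
      exact (h.2.2.2.1 t ht').1 hφr

/-- If `inf_{t ≥ 0} (r(t) - ℓ(t)) > 0` and `(φ, η)` solves the extended Skorokhod
problem on `[ℓ(·), r(·)]` for `ψ`, then `η` has finite variation on every bounded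
time interval and hence `(φ, η)` solves the Skorokhod problem on `[ℓ(·), r(·)]`
for `ψ`. -/
theorem esp_separated_solves_sp (l r ψ φ η : ℝ → ℝ)
    (hl : Cadlag l) (hr : Cadlag r) (hlr : ∀ t : ℝ, 0 ≤ t → l t ≤ r t)
    (hsep : ∃ ε : ℝ, 0 < ε ∧ ∀ t : ℝ, 0 ≤ t → ε ≤ r t - l t)
    (hψ : Cadlag ψ) (hφ : Cadlag φ) (hη : Cadlag η)
    (h : ESP l r ψ φ η) :
    (∀ T : ℝ, 0 < T → BoundedVariationOn η (Set.Icc 0 T)) ∧ SP l r ψ φ η :=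
  esp_separated_solves_sp_general l r ψ φ η hl hr hsep hφ hη h
end

section
/- Explicit formula for the extended Skorokhod map: for any càdlàg ℓ ≤ r and càdlàg ψ, the unique solution (φ, η) of the extended Skorokhod problem on [ℓ(·), r(·)] for ψ is given by φ = ψ − Ξ_{ℓ,r}(ψ) where Ξ_{ℓ,r}(ψ)(t) = max( (ψ(0)−r(0))⁺ ∧ inf_{u∈[0,t]}(ψ(u)−ℓ(u)), sup_{s∈[0,t]} [ (ψ(s)−r(s)) ∧ inf_{u∈[s,t]}(ψ(u)−ℓ(u)) ] ). -/
open Set Filter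

/-- The explicit functional
`Ξ_{ℓ,r}(ψ)(t) = max( (ψ(0)-r(0))⁺ ∧ inf_{u∈[0,t]}(ψ(u)-ℓ(u)),
  sup_{s∈[0,t]} [ (ψ(s)-r(s)) ∧ inf_{u∈[s,t]}(ψ(u)-ℓ(u)) ] )`. -/
noncomputable def Xi (l r ψ : ℝ → ℝ) (t : ℝ) : ℝ :=
  max (min (max (ψ 0 - r 0) 0) (sInf ((fun u => ψ u - l u) '' Set.Icc 0 t)))
      (sSup ((fun s => min (ψ s - r s) (sInf ((fun u => ψ u - l u) '' Set.Icc s t)))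
        '' Set.Icc 0 t))

open Topology

/-!
Write `g = ψ - ℓ` and `h = ψ - r`, so that
`Ξ(t) = max((h 0)⁺ ∧ inf_{[0,t]} g, sup_{v ∈ [0,t]} (h v ∧ inf_{[v,t]} g))`.
Then `h ≤ Ξ ≤ g`, and `Ξ` satisfies the semigroup identity
`Ξ(t) = max(Ξ(s) ∧ inf_{[s,t]} g, sup_{v ∈ [s,t]} (h v ∧ inf_{[v,t]} g))` for `s ≤ t`.
Together with the right continuity of `g` and `h`, a first-passage argument shows that `Ξ` cannot
increase while `h < Ξ` and cannot decrease while `Ξ < g`. The left limit of `Ξ` at `t` is the same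
expression with `[·, t)` in place of `[·, t]`, and `Ξ(t)` is the projection of this left limit onto
`[h t, g t]`: this gives the jump conditions, and at `t = 0` the same holds with left limit `0`.

Uniqueness is a comparison argument. If `η₁ t > η₂ t`, let `σ` be the supremum of the times
`s ≤ t` with `η₁ s ≤ η₂ s`. After `σ` we have `φ₁ > φ₂`, so `φ₁ > ℓ` and `φ₂ < r`: `η₁` decreases
and `η₂` increases on `[σ, t]`, so `η₁ σ > η₂ σ`, and then the jump conditions at `σ` contradict
`η₁(σ-) ≤ η₂(σ-)`.
-/

namespace Cadlag

variable {f g : ℝ → ℝ}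

lemma sub (hf : Cadlag f) (hg : Cadlag g) : Cadlag (f - g) := fun t ht =>
  ⟨(hf t ht).1.sub (hg t ht).1, fun ht' =>
    let ⟨a, ha⟩ := (hf t ht).2 ht'
    let ⟨b, hb⟩ := (hg t ht).2 ht'
    ⟨a - b, ha.sub hb⟩⟩

lemma isBounded_image_Icc (hf : Cadlag f) (T : ℝ) :
    Bornology.IsBounded (f '' Icc 0 T) := by
  refine isCompact_Icc.induction_on (p := fun s => Bornology.IsBounded (f '' s)) (by simp)
    (fun s t hst ht => ht.subset (image_mono hst))
    (fun s t hs ht => by rw [image_union]; exact hs.union ht) fun x hx => ?_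
  obtain ⟨U, hU, hUb⟩ := Metric.exists_isBounded_image_of_tendsto (hf x hx.1).1
  obtain ⟨V, hV, hVb⟩ : ∃ V ∈ 𝓝[<] x, Bornology.IsBounded (f '' (V ∩ Icc 0 T)) := by
    rcases hx.1.eq_or_lt with rfl | hx0
    · refine ⟨Iio 0, self_mem_nhdsWithin, Bornology.isBounded_empty.subset ?_⟩
      rintro _ ⟨u, hu, rfl⟩
      exact absurd hu.2.1 hu.1.not_ge
    · obtain ⟨c, hc⟩ := (hf x hx.1).2 hx0
      obtain ⟨V, hV, hVb⟩ := Metric.exists_isBounded_image_of_tendsto hc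
      exact ⟨V, hV, hVb.subset (image_mono inter_subset_left)⟩
  have hUV : U ∪ V ∈ 𝓝 x := by
    rw [← nhdsLT_sup_nhdsGE, mem_sup]
    exact ⟨mem_of_superset hV subset_union_right, mem_of_superset hU subset_union_left⟩
  refine ⟨Icc 0 T ∩ (U ∪ V), inter_mem_nhdsWithin _ hUV, ?_⟩
  rw [inter_union_distrib_left, image_union, inter_comm _ V]
  exact (hUb.subset (image_mono inter_subset_right)).union hVb

end Cadlag

lemma exists_isLeast_of_continuousWithinAt_Ici {f : ℝ → ℝ} {s u a : ℝ}
    (hf : ∀ x ∈ Icc s u, ContinuousWithinAt f (Ici x) x)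
    (hne : {x ∈ Icc s u | a ≤ f x}.Nonempty) : ∃ x, IsLeast {x ∈ Icc s u | a ≤ f x} x := by
  set P := {x ∈ Icc s u | a ≤ f x}
  have hbdd : BddBelow P := ⟨s, fun x hx => hx.1.1⟩
  obtain ⟨y, hy⟩ := hne
  have hmem : sInf P ∈ Icc s u :=
    ⟨le_csInf ⟨y, hy⟩ fun x hx => hx.1.1, (csInf_le hbdd hy).trans hy.1.2⟩
  refine ⟨sInf P, ⟨hmem, ?_⟩, fun x hx => csInf_le hbdd hx⟩
  by_contra! hlt
  obtain ⟨b, hb, hbf⟩ := mem_nhdsGE_iff_exists_Ico_subset.1 (hf _ hmem (Iio_mem_nhds hlt))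
  obtain ⟨x, hx, hxb⟩ := exists_lt_of_csInf_lt ⟨y, hy⟩ hb
  exact (hbf ⟨csInf_le hbdd hx, hxb⟩ : f x < a).not_ge hx.2

lemma csSup_image_min_const {S : Set ℝ} (hne : S.Nonempty) (hbdd : BddAbove S) (c : ℝ) :
    sSup ((fun x => min x c) '' S) = min (sSup S) c :=
  (Monotone.map_csSup_of_continuousAt (continuous_id.min continuous_const).continuousAt
    (fun _ _ hxy => min_le_min_right c hxy) hne hbdd).symm

lemma le_of_eq_max_min {a b x y : ℝ} (hx : x = max (min y b) a) :
    (a < x → x ≤ y) ∧ (x < b → y ≤ x) := by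
  subst hx
  constructor <;> intro h' <;> grind

namespace Skorokhod

noncomputable def infIcc (g : ℝ → ℝ) (s t : ℝ) : ℝ := sInf (g '' Icc s t)

noncomputable def infIco (g : ℝ → ℝ) (s t : ℝ) : ℝ := sInf (g '' Ico s t)

noncomputable def supInfIcc (g h : ℝ → ℝ) (s t : ℝ) : ℝ :=
  sSup ((fun v => min (h v) (infIcc g v t)) '' Icc s t)

noncomputable def supInfIco (g h : ℝ → ℝ) (t : ℝ) : ℝ :=
  sSup ((fun v => min (h v) (infIco g v t)) '' Ico 0 t)

/-- `Xi l r ψ` is definitionally `xi (ψ - l) (ψ - r)`. -/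
noncomputable def xi (g h : ℝ → ℝ) (t : ℝ) : ℝ :=
  max (min (max (h 0) 0) (infIcc g 0 t)) (supInfIcc g h 0 t)

noncomputable def xiLeft (g h : ℝ → ℝ) (t : ℝ) : ℝ :=
  max (min (max (h 0) 0) (infIco g 0 t)) (supInfIco g h t)

variable {g h : ℝ → ℝ} {s t u v c : ℝ}

lemma infIcc_self : infIcc g t t = g t := by
  simp [infIcc]

lemma infIcc_le (hb : ∀ T, BddBelow (g '' Icc 0 T)) (hs : 0 ≤ s) (hu : u ∈ Icc s t) :
    infIcc g s t ≤ g u :=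
  csInf_le ((hb t).mono (image_mono (Icc_subset_Icc hs le_rfl))) (mem_image_of_mem g hu)

lemma le_infIcc (hst : s ≤ t) (hc : ∀ u ∈ Icc s t, c ≤ g u) : c ≤ infIcc g s t :=
  le_csInf ((nonempty_Icc.2 hst).image g) (forall_mem_image.2 hc)

lemma infIco_le (hb : ∀ T, BddBelow (g '' Icc 0 T)) (hs : 0 ≤ s) (hu : u ∈ Ico s t) :
    infIco g s t ≤ g u :=
  csInf_le ((hb t).mono (image_mono (Ico_subset_Icc_self.trans (Icc_subset_Icc hs le_rfl))))
    (mem_image_of_mem g hu)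

lemma le_infIco (hst : s < t) (hc : ∀ u ∈ Ico s t, c ≤ g u) : c ≤ infIco g s t :=
  le_csInf ((nonempty_Ico.2 hst).image g) (forall_mem_image.2 hc)

lemma infIcc_eq_min (hb : ∀ T, BddBelow (g '' Icc 0 T)) (hv : 0 ≤ v) (hvs : v ≤ s)
    (hst : s ≤ t) : infIcc g v t = min (infIcc g v s) (infIcc g s t) := by
  have hsub : ∀ {a b}, v ≤ a → b ≤ t → Icc a b ⊆ Icc 0 t :=
    fun hva hbt _ hx => ⟨(hv.trans hva).trans hx.1, hx.2.trans hbt⟩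
  rw [infIcc, ← Icc_union_Icc_eq_Icc hvs hst, image_union,
    csInf_union ((hb t).mono (image_mono (hsub le_rfl hst))) ((nonempty_Icc.2 hvs).image g)
      ((hb t).mono (image_mono (hsub hvs le_rfl))) ((nonempty_Icc.2 hst).image g)]
  rfl

lemma infIcc_eq_min_infIco (hb : ∀ T, BddBelow (g '' Icc 0 T)) (hv : 0 ≤ v) (hvt : v < t) :
    infIcc g v t = min (infIco g v t) (g t) := by
  rw [infIcc, ← Ico_insert_right hvt.le, image_insert_eq,
    csInf_insert ((hb t).mono (image_mono (Ico_subset_Icc_self.trans (Icc_subset_Icc hv le_rfl))))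
      ((nonempty_Ico.2 hvt).image g), min_comm]
  rfl

lemma min_infIcc_le (hb : ∀ T, BddBelow (g '' Icc 0 T)) (hv : 0 ≤ v) (hvt : v ≤ t) :
    min (h v) (infIcc g v t) ≤ g t :=
  (min_le_right _ _).trans (infIcc_le hb hv ⟨hvt, le_rfl⟩)

lemma bddAbove_min_infIcc (hb : ∀ T, BddBelow (g '' Icc 0 T)) (hs : 0 ≤ s) :
    BddAbove ((fun v => min (h v) (infIcc g v t)) '' Icc s t) :=
  ⟨g t, forall_mem_image.2 fun _ hv => min_infIcc_le hb (hs.trans hv.1) hv.2⟩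

lemma le_supInfIcc (hb : ∀ T, BddBelow (g '' Icc 0 T)) (hs : 0 ≤ s) (hv : v ∈ Icc s t) :
    min (h v) (infIcc g v t) ≤ supInfIcc g h s t :=
  le_csSup (bddAbove_min_infIcc hb hs) (mem_image_of_mem _ hv)

lemma supInfIcc_le (hst : s ≤ t) (hc : ∀ v ∈ Icc s t, min (h v) (infIcc g v t) ≤ c) :
    supInfIcc g h s t ≤ c :=
  csSup_le ((nonempty_Icc.2 hst).image _) (forall_mem_image.2 hc)

lemma supInfIcc_eq_max (hb : ∀ T, BddBelow (g '' Icc 0 T)) (hv : 0 ≤ v) (hvs : v ≤ s)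
    (hst : s ≤ t) : supInfIcc g h v t =
      max (min (supInfIcc g h v s) (infIcc g s t)) (supInfIcc g h s t) := by
  rw [supInfIcc, ← Icc_union_Icc_eq_Icc hvs hst, image_union,
    csSup_union ((bddAbove_min_infIcc hb hv).mono (image_mono (Icc_subset_Icc_right hst)))
      ((nonempty_Icc.2 hvs).image _) (bddAbove_min_infIcc hb (hv.trans hvs))
      ((nonempty_Icc.2 hst).image _)]
  congr 1
  rw [image_congr fun w hw => by rw [infIcc_eq_min hb (hv.trans hw.1) hw.2 hst, ← min_assoc],
    ← image_image (fun x => min x (infIcc g s t)) (fun w => min (h w) (infIcc g w s)),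
    csSup_image_min_const ((nonempty_Icc.2 hvs).image _) (bddAbove_min_infIcc hb hv)]
  rfl

lemma xi_eq_max (hb : ∀ T, BddBelow (g '' Icc 0 T)) (hs : 0 ≤ s) (hst : s ≤ t) :
    xi g h t = max (min (xi g h s) (infIcc g s t)) (supInfIcc g h s t) := by
  rw [xi, xi, infIcc_eq_min hb le_rfl hs hst, supInfIcc_eq_max hb le_rfl hs hst, ← min_assoc,
    ← max_assoc, ← min_max_distrib_right]

lemma h_le_xi (hb : ∀ T, BddBelow (g '' Icc 0 T)) (hhg : h t ≤ g t) (ht : 0 ≤ t) :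
    h t ≤ xi g h t := by
  have := le_supInfIcc (h := h) hb le_rfl ⟨ht, le_rfl⟩
  rw [infIcc_self, min_eq_left hhg] at this
  exact le_max_of_le_right this

lemma xi_le_g (hb : ∀ T, BddBelow (g '' Icc 0 T)) (ht : 0 ≤ t) : xi g h t ≤ g t :=
  max_le ((min_le_right _ _).trans (infIcc_le hb le_rfl ⟨ht, le_rfl⟩))
    (supInfIcc_le ht fun _ hv => min_infIcc_le hb hv.1 hv.2)

lemma xi_zero (hhg : h 0 ≤ g 0) : xi g h 0 = max (min 0 (g 0)) (h 0) := by
  simp only [xi, supInfIcc, Icc_self, image_singleton, csSup_singleton, infIcc_self,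
    min_eq_left hhg]
  rw [min_max_distrib_right, min_eq_left hhg, max_comm (h 0), max_assoc, max_self]

lemma forall_h_le_xi_of_h_lt_xi (hb : ∀ T, BddBelow (g '' Icc 0 T))
    (hh : ∀ x, 0 ≤ x → ContinuousWithinAt h (Ici x) x) (hhg : ∀ x, 0 ≤ x → h x ≤ g x)
    (hs : 0 ≤ s) (hlt : ∀ u ∈ Ioc s t, h u < xi g h u) : ∀ u ∈ Icc s t, h u ≤ xi g h s := by
  intro u hu
  by_contra! hξu
  obtain ⟨x, ⟨hx, hux⟩, hmin⟩ := exists_isLeast_of_continuousWithinAt_Ici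
    (fun x hx => hh x (hs.trans hx.1)) ⟨u, ⟨hu.1, le_rfl⟩, le_rfl⟩
  have hsx : s < x := hx.1.lt_of_ne <| by
    rintro rfl
    linarith [h_le_xi hb (hhg s hs) hs]
  -- `h < Ξ` at `x` forces a point `v ≤ x` with `h v > h x`, against the minimality of `x`
  have hxξ := hlt x ⟨hsx, hx.2.trans hu.2⟩
  rw [xi_eq_max hb hs hsx.le] at hxξ
  have hF : h x < supInfIcc g h s x := by
    refine (lt_max_iff.1 hxξ).resolve_left fun h' => ?_
    linarith [min_le_left (xi g h s) (infIcc g s x)]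
  obtain ⟨_, ⟨v, hv, rfl⟩, hxv⟩ := exists_lt_of_lt_csSup ((nonempty_Icc.2 hsx.le).image _) hF
  have hhv : h x < h v := hxv.trans_le (min_le_left _ _)
  obtain rfl : v = x := le_antisymm hv.2 (hmin ⟨⟨hv.1, hv.2.trans hx.2⟩, hux.trans hhv.le⟩)
  exact hxv.not_ge (min_le_left _ _)

lemma xi_le_xi_of_h_lt_xi (hb : ∀ T, BddBelow (g '' Icc 0 T))
    (hh : ∀ x, 0 ≤ x → ContinuousWithinAt h (Ici x) x) (hhg : ∀ x, 0 ≤ x → h x ≤ g x)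
    (hs : 0 ≤ s) (hst : s ≤ t) (hlt : ∀ u ∈ Ioc s t, h u < xi g h u) :
    xi g h t ≤ xi g h s := by
  rw [xi_eq_max hb hs hst]
  exact max_le (min_le_left _ _) (supInfIcc_le hst fun v hv =>
    (min_le_left _ _).trans (forall_h_le_xi_of_h_lt_xi hb hh hhg hs hlt v hv))

lemma forall_xi_le_g_of_xi_lt_g (hb : ∀ T, BddBelow (g '' Icc 0 T))
    (hg : ∀ x, 0 ≤ x → ContinuousWithinAt g (Ici x) x) (hs : 0 ≤ s)
    (hlt : ∀ u ∈ Ioc s t, xi g h u < g u) : ∀ u ∈ Icc s t, xi g h s ≤ g u := by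
  intro u hu
  by_contra! hgu
  obtain ⟨x, ⟨hx, hux⟩, hmin⟩ := exists_isLeast_of_continuousWithinAt_Ici (f := -g)
    (fun x hx => (hg x (hs.trans hx.1)).neg) ⟨u, ⟨hu.1, le_rfl⟩, le_rfl⟩
  simp only [Pi.neg_apply, neg_le_neg_iff] at hux
  have hsx : s < x := hx.1.lt_of_ne <| by
    rintro rfl
    linarith [xi_le_g (h := h) hb hs]
  -- `Ξ < g` at `x` forces a point `v ≤ x` with `g v < g x`, against the minimality of `x`
  have hxξ := hlt x ⟨hsx, hx.2.trans hu.2⟩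
  rw [xi_eq_max hb hs hsx.le] at hxξ
  have hI : infIcc g s x < g x := by
    by_contra! hI
    exact (le_max_left _ _).not_gt (hxξ.trans_le (le_min (by linarith) hI))
  obtain ⟨_, ⟨v, hv, rfl⟩, hvx⟩ := exists_lt_of_csInf_lt ((nonempty_Icc.2 hsx.le).image g) hI
  obtain rfl : v = x := le_antisymm hv.2
    (hmin ⟨⟨hv.1, hv.2.trans hx.2⟩, by simp only [Pi.neg_apply]; linarith⟩)
  exact hvx.false

lemma xi_le_xi_of_xi_lt_g (hb : ∀ T, BddBelow (g '' Icc 0 T))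
    (hg : ∀ x, 0 ≤ x → ContinuousWithinAt g (Ici x) x) (hs : 0 ≤ s) (hst : s ≤ t)
    (hlt : ∀ u ∈ Ioc s t, xi g h u < g u) : xi g h s ≤ xi g h t := by
  rw [xi_eq_max hb hs hst]
  exact le_max_of_le_left
    (le_min le_rfl (le_infIcc hst (forall_xi_le_g_of_xi_lt_g hb hg hs hlt)))

lemma tendsto_infIcc_nhdsLT (hb : ∀ T, BddBelow (g '' Icc 0 T)) (hv : 0 ≤ v) (hvt : v < t) :
    Tendsto (infIcc g v) (𝓝[<] t) (𝓝 (infIco g v t)) := by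
  refine tendsto_order.2 ⟨fun a ha => ?_, fun a ha => ?_⟩
  · filter_upwards [Ioo_mem_nhdsLT hvt] with t' ht'
    exact ha.trans_le (le_infIcc ht'.1.le fun u hu => infIco_le hb hv ⟨hu.1, hu.2.trans_lt ht'.2⟩)
  · obtain ⟨_, ⟨u, hu, rfl⟩, hua⟩ := exists_lt_of_csInf_lt ((nonempty_Ico.2 hvt).image g) ha
    filter_upwards [Ioo_mem_nhdsLT hu.2] with t' ht'
    exact (infIcc_le hb hv ⟨hu.1, ht'.1.le⟩).trans_lt hua

lemma eventually_forall_Ioo_sub_le {c δ : ℝ} (hg : Tendsto g (𝓝[<] t) (𝓝 c)) (hδ : 0 < δ) :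
    ∀ᶠ t' in 𝓝[<] t, ∀ u ∈ Ioo t' t, g t' - δ ≤ g u := by
  obtain ⟨b, hbt, hb⟩ := mem_nhdsLT_iff_exists_Ioo_subset.1
    (hg (Metric.ball_mem_nhds c (half_pos hδ)))
  filter_upwards [Ioo_mem_nhdsLT hbt] with t' ht' u hu
  have h₁ : |g t' - c| < δ / 2 := hb ht'
  have h₂ : |g u - c| < δ / 2 := hb ⟨ht'.1.trans hu.1, hu.2⟩
  linarith [abs_lt.1 h₁, abs_lt.1 h₂]

lemma infIcc_sub_le_infIco (hb : ∀ T, BddBelow (g '' Icc 0 T)) {t' δ : ℝ} (hv : 0 ≤ v)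
    (hvt' : v ≤ t') (ht' : t' < t) (hδ : 0 ≤ δ) (hg : ∀ u ∈ Ioo t' t, g t' - δ ≤ g u) :
    infIcc g v t' - δ ≤ infIco g v t := by
  refine le_infIco (hvt'.trans_lt ht') fun u hu => ?_
  rcases le_or_gt u t' with hut' | ht'u
  · linarith [infIcc_le hb hv ⟨hu.1, hut'⟩]
  · linarith [infIcc_le hb hv ⟨hvt', le_rfl⟩, hg u ⟨ht'u, hu.2⟩]

lemma bddAbove_min_infIco (hb : ∀ T, BddBelow (g '' Icc 0 T))
    (ha : ∀ T, BddAbove (g '' Icc 0 T)) :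
    BddAbove ((fun v => min (h v) (infIco g v t)) '' Ico 0 t) := by
  obtain ⟨M, hM⟩ := ha t
  refine ⟨M, forall_mem_image.2 fun v hv => ?_⟩
  exact (min_le_right _ _).trans ((infIco_le hb hv.1 ⟨le_rfl, hv.2⟩).trans
    (hM (mem_image_of_mem g (Ico_subset_Icc_self hv))))

lemma tendsto_supInfIcc_nhdsLT (hb : ∀ T, BddBelow (g '' Icc 0 T))
    (ha : ∀ T, BddAbove (g '' Icc 0 T)) (hgt : ∃ c, Tendsto g (𝓝[<] t) (𝓝 c)) (ht : 0 < t) :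
    Tendsto (supInfIcc g h 0) (𝓝[<] t) (𝓝 (supInfIco g h t)) := by
  refine tendsto_order.2 ⟨fun a ha' => ?_, fun a ha' => ?_⟩
  · obtain ⟨_, ⟨v, hv, rfl⟩, hav⟩ := exists_lt_of_lt_csSup ((nonempty_Ico.2 ht).image _) ha'
    filter_upwards [Ioo_mem_nhdsLT hv.2] with t' ht'
    calc a < min (h v) (infIco g v t) := hav
      _ ≤ min (h v) (infIcc g v t') := min_le_min_left _
          (le_infIcc ht'.1.le fun u hu => infIco_le hb hv.1 ⟨hu.1, hu.2.trans_lt ht'.2⟩)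
      _ ≤ supInfIcc g h 0 t' := le_supInfIcc hb le_rfl ⟨hv.1, ht'.1.le⟩
  · obtain ⟨c, hc⟩ := hgt
    obtain ⟨δ, hδ, hδa⟩ : ∃ δ > 0, supInfIco g h t + δ < a :=
      ⟨(a - supInfIco g h t) / 2, by linarith, by linarith⟩
    filter_upwards [eventually_forall_Ioo_sub_le hc hδ, Ioo_mem_nhdsLT ht] with t' hg ht'
    refine (supInfIcc_le ht'.1.le fun v hv => ?_).trans_lt hδa
    have hvt : v ∈ Ico 0 t := ⟨hv.1, hv.2.trans_lt ht'.2⟩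
    calc min (h v) (infIcc g v t') ≤ min (h v + δ) (infIco g v t + δ) := min_le_min (by linarith)
          (by linarith [infIcc_sub_le_infIco hb hv.1 hv.2 ht'.2 hδ.le hg])
      _ = min (h v) (infIco g v t) + δ := min_add_add_right _ _ _
      _ ≤ supInfIco g h t + δ := by
          gcongr
          exact le_csSup (bddAbove_min_infIco hb ha) (mem_image_of_mem _ hvt)

lemma tendsto_xi_nhdsLT (hb : ∀ T, BddBelow (g '' Icc 0 T))
    (ha : ∀ T, BddAbove (g '' Icc 0 T)) (hgt : ∃ c, Tendsto g (𝓝[<] t) (𝓝 c)) (ht : 0 < t) :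
    Tendsto (xi g h) (𝓝[<] t) (𝓝 (xiLeft g h t)) :=
  (tendsto_const_nhds.min (tendsto_infIcc_nhdsLT hb le_rfl ht)).max
    (tendsto_supInfIcc_nhdsLT hb ha hgt ht)

lemma xi_eq_max_min_xiLeft (hb : ∀ T, BddBelow (g '' Icc 0 T))
    (ha : ∀ T, BddAbove (g '' Icc 0 T)) (hhg : h t ≤ g t) (ht : 0 < t) :
    xi g h t = max (min (xiLeft g h t) (g t)) (h t) := by
  have hF : supInfIcc g h 0 t = max (min (supInfIco g h t) (g t)) (h t) := by
    rw [supInfIcc, ← Ico_insert_right ht.le, image_insert_eq,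
      csSup_insert ((bddAbove_min_infIcc hb le_rfl).mono (image_mono Ico_subset_Icc_self))
        ((nonempty_Ico.2 ht).image _), infIcc_self, min_eq_left hhg, max_comm]
    congr 1
    rw [image_congr fun v hv => by rw [infIcc_eq_min_infIco hb hv.1 hv.2, ← min_assoc],
      ← image_image (fun x => min x (g t)) (fun v => min (h v) (infIco g v t)),
      csSup_image_min_const ((nonempty_Ico.2 ht).image _) (bddAbove_min_infIco hb ha)]
    rfl
  rw [xi, xiLeft, infIcc_eq_min_infIco hb le_rfl ht, hF, ← min_assoc, ← max_assoc,
    ← min_max_distrib_right]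

end Skorokhod

namespace ESP

variable {l r ψ φ₁ η₁ φ₂ η₂ : ℝ → ℝ}

lemma lt_of_eta_lt (e₁ : ESP l r ψ φ₁ η₁) (e₂ : ESP l r ψ φ₂ η₂) {u : ℝ} (hu : 0 ≤ u)
    (hη : η₂ u < η₁ u) : l u < φ₁ u ∧ φ₂ u < r u := by
  obtain ⟨hφ₁, hl₁, hr₁⟩ := e₁.1 u hu
  obtain ⟨hφ₂, hl₂, hr₂⟩ := e₂.1 u hu
  constructor <;> linarith

lemma eta_zero_le (e₁ : ESP l r ψ φ₁ η₁) (e₂ : ESP l r ψ φ₂ η₂) : η₁ 0 ≤ η₂ 0 := by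
  by_contra! hη
  obtain ⟨hl, hr⟩ := e₁.lt_of_eta_lt e₂ le_rfl hη
  linarith [e₁.2.2.2.2.2 hl, e₂.2.2.2.2.1 hr]

lemma eta_le (e₁ : ESP l r ψ φ₁ η₁) (e₂ : ESP l r ψ φ₂ η₂)
    (hL₁ : ∀ t, 0 < t → ∃ c, Tendsto η₁ (𝓝[<] t) (𝓝 c))
    (hL₂ : ∀ t, 0 < t → ∃ c, Tendsto η₂ (𝓝[<] t) (𝓝 c)) {t : ℝ} (ht : 0 ≤ t) :
    η₁ t ≤ η₂ t := by
  by_contra! hη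
  set A := {u ∈ Icc 0 t | η₁ u ≤ η₂ u}
  have h0A : 0 ∈ A := ⟨⟨le_rfl, ht⟩, e₁.eta_zero_le e₂⟩
  set σ := sSup A
  have hσ : IsLUB A σ := isLUB_csSup ⟨0, h0A⟩ ⟨t, fun u hu => hu.1.2⟩
  have hσ0 : 0 ≤ σ := hσ.1 h0A
  have hσt : σ ≤ t := hσ.2 fun u hu => hu.1.2
  have hlt : ∀ u, σ < u → u ≤ t → η₂ u < η₁ u := fun u hσu hut => by
    by_contra! hu
    exact (hσ.1 ⟨⟨hσ0.trans hσu.le, hut⟩, hu⟩).not_gt hσu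
  have hσlt : η₂ σ < η₁ σ := by
    have h₁ := e₁.2.2.1 σ t hσ0 hσt fun u hσu hut =>
      (e₁.lt_of_eta_lt e₂ (hσ0.trans hσu.le) (hlt u hσu hut)).1
    have h₂ := e₂.2.1 σ t hσ0 hσt fun u hσu hut =>
      (e₁.lt_of_eta_lt e₂ (hσ0.trans hσu.le) (hlt u hσu hut)).2
    linarith
  have hσA : σ ∉ A := fun h => h.2.not_gt hσlt
  have hσpos : 0 < σ := hσ0.lt_of_ne fun h => hσA (h ▸ h0A)
  have hfreq : ∃ᶠ u in 𝓝[<] σ, η₁ u - η₂ u ∈ Iic 0 := by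
    refine frequently_iff.2 fun {U} hU => ?_
    obtain ⟨b, hb, hbU⟩ := mem_nhdsLT_iff_exists_Ioo_subset.1 hU
    obtain ⟨a, haA, hba, haσ⟩ := hσ.exists_between hb
    exact ⟨a, hbU ⟨hba, haσ.lt_of_ne (ne_of_mem_of_not_mem haA hσA)⟩, sub_nonpos.2 haA.2⟩
  obtain ⟨c₁, hc₁⟩ := hL₁ σ hσpos
  obtain ⟨c₂, hc₂⟩ := hL₂ σ hσpos
  have hc : c₁ - c₂ ≤ 0 := isClosed_Iic.mem_of_frequently_of_tendsto hfreq (hc₁.sub hc₂)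
  obtain ⟨hl, hr⟩ := e₁.lt_of_eta_lt e₂ hσ0 hσlt
  have hj₁ := (e₁.2.2.2.1 σ hσpos).2 hl
  have hj₂ := (e₂.2.2.2.1 σ hσpos).1 hr
  rw [leftLim_eq_of_tendsto hc₁] at hj₁
  rw [leftLim_eq_of_tendsto hc₂] at hj₂
  linarith

end ESP

open Skorokhod

lemma tendsto_Xi_nhdsLT {l r ψ : ℝ → ℝ} (hl : Cadlag l) (hψ : Cadlag ψ) {t : ℝ} (ht : 0 < t) :
    Tendsto (Xi l r ψ) (𝓝[<] t) (𝓝 (xiLeft (ψ - l) (ψ - r) t)) :=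
  have hg := hψ.sub hl
  tendsto_xi_nhdsLT (fun T => (hg.isBounded_image_Icc T).bddBelow)
    (fun T => (hg.isBounded_image_Icc T).bddAbove) ((hg t ht.le).2 ht) ht

theorem esp_Xi {l r ψ : ℝ → ℝ} (hl : Cadlag l) (hr : Cadlag r)
    (hlr : ∀ t, 0 ≤ t → l t ≤ r t) (hψ : Cadlag ψ) :
    ESP l r ψ (fun t => ψ t - Xi l r ψ t) (fun t => -Xi l r ψ t) := by
  have hg := hψ.sub hl
  have hb : ∀ T, BddBelow ((ψ - l) '' Icc 0 T) := fun T => (hg.isBounded_image_Icc T).bddBelow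
  have ha : ∀ T, BddAbove ((ψ - l) '' Icc 0 T) := fun T => (hg.isBounded_image_Icc T).bddAbove
  have hh : ∀ x, 0 ≤ x → ContinuousWithinAt (ψ - r) (Ici x) x :=
    fun x hx => ((hψ.sub hr) x hx).1
  have hhg : ∀ t, 0 ≤ t → (ψ - r) t ≤ (ψ - l) t := fun t ht => sub_le_sub_left (hlr t ht) _
  have hr_iff : ∀ u, ψ u - Xi l r ψ u < r u ↔ (ψ - r) u < xi (ψ - l) (ψ - r) u :=
    fun _ => sub_lt_comm
  have hl_iff : ∀ u, l u < ψ u - Xi l r ψ u ↔ xi (ψ - l) (ψ - r) u < (ψ - l) u :=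
    fun _ => lt_sub_comm
  refine ⟨fun t ht => ⟨by ring, le_sub_comm.1 (xi_le_g (h := ψ - r) hb ht),
    sub_le_comm.1 (h_le_xi hb (hhg t ht) ht)⟩, fun s t hs hst hlt => ?_,
    fun s t hs hst hlt => ?_, fun t ht => ?_, ?_⟩
  · exact neg_le_neg (xi_le_xi_of_h_lt_xi hb hh hhg hs hst
      fun u hu => (hr_iff u).1 (hlt u hu.1 hu.2))
  · exact neg_le_neg (xi_le_xi_of_xi_lt_g hb (fun x hx => (hg x hx).1) hs hst
      fun u hu => (hl_iff u).1 (hlt u hu.1 hu.2))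
  · rw [leftLim_eq_of_tendsto (tendsto_Xi_nhdsLT hl hψ ht).neg]
    obtain ⟨h₁, h₂⟩ := le_of_eq_max_min (xi_eq_max_min_xiLeft hb ha (hhg t ht.le) ht)
    exact ⟨fun h' => neg_le_neg (h₁ ((hr_iff t).1 h')), fun h' => neg_le_neg (h₂ ((hl_iff t).1 h'))⟩
  · obtain ⟨h₁, h₂⟩ := le_of_eq_max_min (xi_zero (hhg 0 le_rfl))
    exact ⟨fun h' => neg_nonneg.2 (h₁ ((hr_iff 0).1 h')),
      fun h' => neg_nonpos.2 (h₂ ((hl_iff 0).1 h'))⟩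

/-- Existence, uniqueness and explicit formula for the extended Skorokhod map on a
time-dependent interval: for càdlàg `ℓ ≤ r` and any càdlàg `ψ`, the pair
`(ψ - Ξ_{ℓ,r}(ψ), -Ξ_{ℓ,r}(ψ))` solves the ESP on `[ℓ(·), r(·)]` for `ψ`, and any
càdlàg solution `(φ, η)` of this ESP satisfies `φ = ψ - Ξ_{ℓ,r}(ψ)` and
`η = -Ξ_{ℓ,r}(ψ)` on `[0, ∞)`. -/
theorem esp_exists_unique_explicit (l r ψ : ℝ → ℝ)
    (hl : Cadlag l) (hr : Cadlag r) (hlr : ∀ t : ℝ, 0 ≤ t → l t ≤ r t)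
    (hψ : Cadlag ψ) :
    ESP l r ψ (fun t => ψ t - Xi l r ψ t) (fun t => -Xi l r ψ t) ∧
    (∀ φ η : ℝ → ℝ, Cadlag φ → Cadlag η → ESP l r ψ φ η →
      ∀ t : ℝ, 0 ≤ t → φ t = ψ t - Xi l r ψ t ∧ η t = -Xi l r ψ t) := by
  have hsol := esp_Xi hl hr hlr hψ
  have hleft : ∀ t, 0 < t → ∃ c, Tendsto (fun u => -Xi l r ψ u) (𝓝[<] t) (𝓝 c) :=
    fun t ht => ⟨_, (tendsto_Xi_nhdsLT hl hψ ht).neg⟩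
  refine ⟨hsol, fun φ η _ hη hesp t ht => ?_⟩
  have hηleft : ∀ t, 0 < t → ∃ c, Tendsto η (𝓝[<] t) (𝓝 c) := fun t ht => (hη t ht.le).2 ht
  have hηt : η t = -Xi l r ψ t :=
    le_antisymm (hesp.eta_le hsol hηleft hleft ht) (hsol.eta_le hesp hleft hηleft ht)
  exact ⟨by rw [(hesp.1 t ht).1, hηt, sub_eq_add_neg], hηt⟩
end

section
/- The extended Skorokhod map is jointly continuous: if ℓ_n → ℓ, r_n → r, ψ_n → ψ uniformly on compact sets (with ℓ_n ≤ r_n, ℓ ≤ r càdlàg), then Γ̄_{ℓ_n, r_n}(ψ_n) → Γ̄_{ℓ, r}(ψ) uniformly on compact sets. -/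
open Set Filter

/-- The extended Skorokhod map `Γ̄_{ℓ,r}(ψ) = ψ - Ξ_{ℓ,r}(ψ)`. -/
noncomputable def ESM (l r ψ : ℝ → ℝ) (t : ℝ) : ℝ := ψ t - Xi l r ψ t

/-!
Every operation building `Ξ_{ℓ,r}(ψ)(t)` out of `ψ - ℓ` and `ψ - r` on `[0, t]` (infima and
suprema over sets of times, `min`, `max`, positive part) is `1`-Lipschitz for the uniform distance,
so `Γ̄` is Lipschitz for the uniform distance on each `[0, T]`, jointly in `(ℓ, r, ψ)`.
-/

section ImageBounds

variable {α : Type*} {f g : α → ℝ} {D : Set α} {δ : ℝ}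

lemma bddAbove_image_of_abs_sub_le (h : ∀ x ∈ D, |f x - g x| ≤ δ) (hg : BddAbove (g '' D)) :
    BddAbove (f '' D) := by
  obtain ⟨M, hM⟩ := hg
  refine ⟨M + δ, ?_⟩
  rintro _ ⟨x, hx, rfl⟩
  have hgx : g x ≤ M := hM (mem_image_of_mem g hx)
  linarith [(abs_le.1 (h x hx)).2]

lemma csSup_image_le_add_of_abs_sub_le (hD : D.Nonempty) (h : ∀ x ∈ D, |f x - g x| ≤ δ)
    (hg : BddAbove (g '' D)) : sSup (f '' D) ≤ sSup (g '' D) + δ := by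
  refine csSup_le (hD.image f) ?_
  rintro _ ⟨x, hx, rfl⟩
  have hgx : g x ≤ sSup (g '' D) := le_csSup hg (mem_image_of_mem g hx)
  linarith [(abs_le.1 (h x hx)).2]

/-- Also true when the images are unbounded, since then both suprema are the junk value `0`. -/
lemma abs_sSup_image_sub_sSup_image_le (hD : D.Nonempty) (h : ∀ x ∈ D, |f x - g x| ≤ δ) :
    |sSup (f '' D) - sSup (g '' D)| ≤ δ := by
  obtain ⟨x₀, hx₀⟩ := hD
  have h' : ∀ x ∈ D, |g x - f x| ≤ δ := fun x hx => abs_sub_comm (g x) (f x) ▸ h x hx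
  by_cases hg : BddAbove (g '' D)
  · have hf := bddAbove_image_of_abs_sub_le h hg
    rw [abs_le]
    constructor
    · linarith [csSup_image_le_add_of_abs_sub_le ⟨x₀, hx₀⟩ h' hf]
    · linarith [csSup_image_le_add_of_abs_sub_le ⟨x₀, hx₀⟩ h hg]
  · have hf : ¬BddAbove (f '' D) := fun hf => hg (bddAbove_image_of_abs_sub_le h' hf)
    rw [Real.sSup_of_not_bddAbove hg, Real.sSup_of_not_bddAbove hf, sub_zero, abs_zero]
    exact (abs_nonneg _).trans (h x₀ hx₀)

lemma abs_sInf_image_sub_sInf_image_le (hD : D.Nonempty) (h : ∀ x ∈ D, |f x - g x| ≤ δ) :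
    |sInf (f '' D) - sInf (g '' D)| ≤ δ := by
  have hneg : ∀ φ : α → ℝ, -(φ '' D) = (fun x => -φ x) '' D := fun φ => by
    rw [← image_neg_eq_neg, image_image]
  rw [Real.sInf_def, Real.sInf_def, hneg, hneg, neg_sub_neg]
  refine abs_sSup_image_sub_sSup_image_le hD fun x hx => ?_
  rw [neg_sub_neg]
  exact h x hx

end ImageBounds

lemma abs_sub_sub_sub_le {x x' y y' a b : ℝ} (hx : |x - x'| ≤ a) (hy : |y - y'| ≤ b) :
    |(x - y) - (x' - y')| ≤ a + b := by
  calc |(x - y) - (x' - y')| = |(x - x') - (y - y')| := by ring_nf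
    _ ≤ |x - x'| + |y - y'| := abs_sub _ _
    _ ≤ a + b := add_le_add hx hy

section Lipschitz

variable {l l' r r' ψ ψ' : ℝ → ℝ} {t a b : ℝ}

lemma abs_Xi_sub_Xi_le (ht : 0 ≤ t) (hψ : ∀ u ∈ Icc 0 t, |ψ u - ψ' u| ≤ a)
    (hl : ∀ u ∈ Icc 0 t, |l u - l' u| ≤ b) (hr : ∀ u ∈ Icc 0 t, |r u - r' u| ≤ b) :
    |Xi l r ψ t - Xi l' r' ψ' t| ≤ a + b := by
  have hψl : ∀ u ∈ Icc 0 t, |(ψ u - l u) - (ψ' u - l' u)| ≤ a + b :=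
    fun u hu => abs_sub_sub_sub_le (hψ u hu) (hl u hu)
  have hψr : ∀ u ∈ Icc 0 t, |(ψ u - r u) - (ψ' u - r' u)| ≤ a + b :=
    fun u hu => abs_sub_sub_sub_le (hψ u hu) (hr u hu)
  have hinf : ∀ s ∈ Icc 0 t, |sInf ((fun u => ψ u - l u) '' Icc s t)
      - sInf ((fun u => ψ' u - l' u) '' Icc s t)| ≤ a + b := fun s hs =>
    abs_sInf_image_sub_sInf_image_le (nonempty_Icc.2 hs.2)
      fun u hu => hψl u ⟨hs.1.trans hu.1, hu.2⟩
  have h0 : (0 : ℝ) ∈ Icc 0 t := ⟨le_rfl, ht⟩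
  have hab : 0 ≤ a + b := (abs_nonneg _).trans (hψl 0 h0)
  unfold Xi
  refine (abs_max_sub_max_le_max _ _ _ _).trans (max_le ?_ ?_)
  · refine (abs_min_sub_min_le_max _ _ _ _).trans (max_le ?_ (hinf 0 h0))
    refine (abs_max_sub_max_le_max _ _ _ _).trans (max_le (hψr 0 h0) ?_)
    rwa [sub_zero, abs_zero]
  · exact abs_sSup_image_sub_sSup_image_le (nonempty_Icc.2 ht)
      fun s hs => (abs_min_sub_min_le_max _ _ _ _).trans (max_le (hψr s hs) (hinf s hs))

lemma abs_ESM_sub_ESM_le (ht : 0 ≤ t) (hψ : ∀ u ∈ Icc 0 t, |ψ u - ψ' u| ≤ a)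
    (hl : ∀ u ∈ Icc 0 t, |l u - l' u| ≤ b) (hr : ∀ u ∈ Icc 0 t, |r u - r' u| ≤ b) :
    |ESM l r ψ t - ESM l' r' ψ' t| ≤ 2 * a + b := by
  unfold ESM
  calc |(ψ t - Xi l r ψ t) - (ψ' t - Xi l' r' ψ' t)| ≤ a + (a + b) :=
        abs_sub_sub_sub_le (hψ t ⟨ht, le_rfl⟩) (abs_Xi_sub_Xi_le ht hψ hl hr)
    _ = 2 * a + b := by ring

end Lipschitz

theorem esm_continuous_general
    (ln rn ψn : ℕ → ℝ → ℝ) (l r ψ : ℝ → ℝ)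
    (hconvl : ∀ T : ℝ, 0 < T → TendstoUniformlyOn ln l Filter.atTop (Set.Icc 0 T))
    (hconvr : ∀ T : ℝ, 0 < T → TendstoUniformlyOn rn r Filter.atTop (Set.Icc 0 T))
    (hconvψ : ∀ T : ℝ, 0 < T → TendstoUniformlyOn ψn ψ Filter.atTop (Set.Icc 0 T)) :
    ∀ T : ℝ, 0 < T →
      TendstoUniformlyOn (fun n => ESM (ln n) (rn n) (ψn n)) (ESM l r ψ)
        Filter.atTop (Set.Icc 0 T) := by
  intro T hT
  rw [Metric.tendstoUniformlyOn_iff]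
  intro ε hε
  have hε4 : 0 < ε / 4 := by linarith
  filter_upwards [Metric.tendstoUniformlyOn_iff.1 (hconvl T hT) _ hε4,
    Metric.tendstoUniformlyOn_iff.1 (hconvr T hT) _ hε4,
    Metric.tendstoUniformlyOn_iff.1 (hconvψ T hT) _ hε4] with n hl hr hψ t ht
  have close : ∀ {f g : ℝ → ℝ}, (∀ u ∈ Icc 0 T, dist (f u) (g u) < ε / 4) →
      ∀ u ∈ Icc 0 t, |f u - g u| ≤ ε / 4 := fun h u hu =>
    (Real.dist_eq _ _ ▸ h u ⟨hu.1, hu.2.trans ht.2⟩).le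
  rw [Real.dist_eq]
  calc _ ≤ 2 * (ε / 4) + ε / 4 := abs_ESM_sub_ESM_le ht.1 (close hψ) (close hl) (close hr)
    _ < ε := by linarith

/-- Joint continuity of the extended Skorokhod map: if `ℓ_n → ℓ`, `r_n → r`,
`ψ_n → ψ` uniformly on compact subsets of `[0, ∞)` (with `ℓ_n ≤ r_n`, `ℓ ≤ r`
càdlàg), then `Γ̄_{ℓ_n, r_n}(ψ_n) → Γ̄_{ℓ,r}(ψ)` uniformly on compact sets. -/
theorem esm_continuous
    (ln rn ψn : ℕ → ℝ → ℝ) (l r ψ : ℝ → ℝ)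
    (hln : ∀ n, Cadlag (ln n)) (hrn : ∀ n, Cadlag (rn n))
    (hlrn : ∀ n, ∀ t : ℝ, 0 ≤ t → ln n t ≤ rn n t)
    (hψn : ∀ n, Cadlag (ψn n))
    (hl : Cadlag l) (hr : Cadlag r) (hlr : ∀ t : ℝ, 0 ≤ t → l t ≤ r t)
    (hψ : Cadlag ψ)
    (hconvl : ∀ T : ℝ, 0 < T → TendstoUniformlyOn ln l Filter.atTop (Set.Icc 0 T))
    (hconvr : ∀ T : ℝ, 0 < T → TendstoUniformlyOn rn r Filter.atTop (Set.Icc 0 T))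
    (hconvψ : ∀ T : ℝ, 0 < T → TendstoUniformlyOn ψn ψ Filter.atTop (Set.Icc 0 T)) :
    ∀ T : ℝ, 0 < T →
      TendstoUniformlyOn (fun n => ESM (ln n) (rn n) (ψn n)) (ESM l r ψ)
        Filter.atTop (Set.Icc 0 T) :=
  esm_continuous_general ln rn ψn l r ψ hconvl hconvr hconvψ
end

section
/- For piecewise constant ℓ ≤ r and ψ, each with finitely many jumps, the pair (ψ − Ξ_{ℓ,r}(ψ), −Ξ_{ℓ,r}(ψ)) solves the extended Skorokhod problem on [ℓ(·), r(·)] for ψ. -/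
open Set Filter

/-- `f` is piecewise constant on `[0, ∞)` with finitely many jumps: there is a finite
set `S` of jump times off which `f` is locally constant. -/
def PiecewiseConstant (f : ℝ → ℝ) : Prop :=
  ∃ S : Finset ℝ, ∀ s t : ℝ, 0 ≤ s → s ≤ t → (∀ u ∈ Set.Ioc s t, u ∉ S) → f t = f s

/-!
In terms of the gaps `a = ψ - ℓ ≥ b = ψ - r`, `Ξ` has the semigroup property
`Ξ(t) = max (min (Ξ(s), inf_{[s,t]} a), sup_{u ∈ [s,t]} min (b(u), inf_{[u,t]} a))`.
When `a` and `b` are constant on `[s, t)` this collapses to the clamp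
`Ξ(t) = max (b(t), min (Ξ(s), a(t)))`, and at time `0` to the same clamp started from `0`.
So `Ξ` is constant between jumps, and across a jump it can only decrease where `b < Ξ`
(i.e. `φ < r`) and only increase where `Ξ < a` (i.e. `φ > ℓ`). With finitely many jumps these
local comparisons chain together into the monotonicity conditions of the ESP.
-/

section Lattice

variable {α : Type*} [LinearOrder α] {a b x y : α}

lemma le_of_eq_max_min_of_lower_lt (h : y = max b (min x a)) (hb : b < y) : y ≤ x :=
  (le_max_iff.1 (h ▸ max_le_max le_rfl (min_le_left x a))).resolve_left hb.not_ge

lemma le_of_eq_max_min_of_lt_upper (h : y = max b (min x a)) (ha : y < a) : x ≤ y :=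
  (min_le_iff.1 (h ▸ le_max_right b (min x a))).resolve_right ha.not_ge

end Lattice

lemma Finset.exists_mem_insert_forall_notMem_Ioc (S : Finset ℝ) {s u : ℝ} (h : s ≤ u) :
    ∃ v ∈ insert s S, v ∈ Set.Icc s u ∧ ∀ w ∈ Set.Ioc v u, w ∉ S := by
  classical
  set T := (insert s S).filter (· ≤ u)
  have hsT : s ∈ T := by simp [T, h]
  have hv := Finset.mem_filter.1 (T.max'_mem ⟨s, hsT⟩)
  refine ⟨T.max' ⟨s, hsT⟩, hv.1, ⟨T.le_max' s hsT, hv.2⟩, fun w hw hwS => ?_⟩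
  exact hw.1.not_ge (T.le_max' w (by simp [T, hwS, hw.2]))

lemma Finset.exists_forall_notMem_Ioo (S : Finset ℝ) {s t : ℝ} (hst : s < t) :
    ∃ v ∈ Set.Ico s t, ∀ w ∈ Set.Ioo v t, w ∉ S := by
  classical
  obtain ⟨v, hvS, hv, hgap⟩ := (S.filter (· < t)).exists_mem_insert_forall_notMem_Ioc hst.le
  refine ⟨v, ⟨hv.1, ?_⟩, fun w hw hwS => hgap w ⟨hw.1, hw.2.le⟩ (by simp [hwS, hw.2])⟩
  rcases Finset.mem_insert.1 hvS with rfl | hvS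
  exacts [hst, (Finset.mem_filter.1 hvS).2]

theorem le_of_le_across_gaps {α β : Type*} [LinearOrder α] [Preorder β]
    (S : Finset α) (g : α → β) {s t : α} (hst : s ≤ t)
    (h : ∀ m u, s ≤ m → m < u → u ≤ t → (∀ w ∈ Ioo m u, w ∉ S) → g u ≤ g m) :
    g t ≤ g s := by
  classical
  induction S using Finset.induction_on generalizing s t with
  | empty =>
    rcases hst.eq_or_lt with rfl | hst
    exacts [le_rfl, h s t le_rfl hst le_rfl fun w _ => Finset.notMem_empty w]
  | insert p S _ ih =>
    by_cases hp : p ∈ Ioo s t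
    · refine (ih hp.2.le fun m u hpm hmu hut hgap => h m u (hp.1.le.trans hpm) hmu hut ?_).trans
        (ih hp.1.le fun m u hsm hmu hup hgap => h m u hsm hmu (hup.trans hp.2.le) ?_)
      · exact fun w hw => by simp [hgap w hw, (hpm.trans_lt hw.1).ne']
      · exact fun w hw => by simp [hgap w hw, (hw.2.trans_le hup).ne]
    · exact ih hst fun m u hsm hmu hut hgap => h m u hsm hmu hut fun w hw => by
        have : w ≠ p := fun hwp => hp (hwp ▸ ⟨hsm.trans_lt hw.1, hw.2.trans_le hut⟩)
        simp [hgap w hw, this]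

lemma leftLim_eq_of_forall_Ioo {f : ℝ → ℝ} {v t c : ℝ} (hvt : v < t)
    (h : ∀ u ∈ Ioo v t, f u = c) : Function.leftLim f t = c :=
  leftLim_eq_of_tendsto <| tendsto_const_nhds.congr' <|
    eventuallyEq_of_mem (Ioo_mem_nhdsLT hvt) fun u hu => (h u hu).symm

def PiecewiseConstantWith (S : Finset ℝ) (f : ℝ → ℝ) : Prop :=
  ∀ s t : ℝ, 0 ≤ s → s ≤ t → (∀ u ∈ Set.Ioc s t, u ∉ S) → f t = f s

namespace PiecewiseConstantWith

variable {S T : Finset ℝ} {f g : ℝ → ℝ}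

lemma mono (hST : S ⊆ T) (hf : PiecewiseConstantWith S f) : PiecewiseConstantWith T f :=
  fun s t hs hst hgap => hf s t hs hst fun u hu huS => hgap u hu (hST huS)

lemma sub (hf : PiecewiseConstantWith S f) (hg : PiecewiseConstantWith S g) :
    PiecewiseConstantWith S (fun u => f u - g u) :=
  fun s t hs hst hgap => by simp only [hf s t hs hst hgap, hg s t hs hst hgap]

lemma eq_of_forall_notMem_Ioo (hf : PiecewiseConstantWith S f) {s t : ℝ} (hs : 0 ≤ s)
    (hgap : ∀ w ∈ Ioo s t, w ∉ S) : ∀ u ∈ Ico s t, f u = f s :=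
  fun u hu => hf s u hs hu.1 fun w hw => hgap w ⟨hw.1, hw.2.trans_lt hu.2⟩

lemma bddBelow_image_Icc (hf : PiecewiseConstantWith S f) {s t : ℝ} (hs : 0 ≤ s) :
    BddBelow (f '' Icc s t) := by
  refine (((insert s S).finite_toSet.image f).bddBelow).mono ?_
  rintro _ ⟨u, hu, rfl⟩
  obtain ⟨v, hvS, hv, hgap⟩ := S.exists_mem_insert_forall_notMem_Ioc hu.1
  exact ⟨v, hvS, (hf v u (hs.trans hv.1) hv.2 hgap).symm⟩

end PiecewiseConstantWith

lemma PiecewiseConstant.sub {f g : ℝ → ℝ} (hf : PiecewiseConstant f)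
    (hg : PiecewiseConstant g) :
    ∃ S, PiecewiseConstantWith S (fun u => f u - g u) := by
  obtain ⟨S, hS⟩ := hf
  obtain ⟨T, hT⟩ := hg
  exact ⟨S ∪ T, (PiecewiseConstantWith.mono Finset.subset_union_left hS).sub
    (PiecewiseConstantWith.mono Finset.subset_union_right hT)⟩

lemma csInf_image_Icc_le_right {a : ℝ → ℝ} {u t : ℝ} (h : BddBelow (a '' Icc u t))
    (hut : u ≤ t) :
    sInf (a '' Icc u t) ≤ a t :=
  csInf_le h ⟨t, ⟨hut, le_rfl⟩, rfl⟩

lemma sInf_image_Icc_eq_min {a : ℝ → ℝ} {u s t : ℝ} (hus : u ≤ s) (hst : s ≤ t)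
    (hu : BddBelow (a '' Icc u s)) (hs : BddBelow (a '' Icc s t)) :
    sInf (a '' Icc u t) = min (sInf (a '' Icc u s)) (sInf (a '' Icc s t)) := by
  rw [← Icc_union_Icc_eq_Icc hus hst, image_union,
    csInf_union hu ((nonempty_Icc.2 hus).image a) hs ((nonempty_Icc.2 hst).image a)]

/-- `Ξ_{ℓ,r}(ψ)` depends on `ψ, ℓ, r` only through the gaps `a = ψ - ℓ` and `b = ψ - r`.
-/
noncomputable def xiOfGaps (a b : ℝ → ℝ) (t : ℝ) : ℝ :=
  max (min (max (b 0) 0) (sInf (a '' Icc 0 t)))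
      (sSup ((fun s => min (b s) (sInf (a '' Icc s t))) '' Icc 0 t))

lemma Xi_eq_xiOfGaps (l r ψ : ℝ → ℝ) :
    Xi l r ψ = xiOfGaps (fun u => ψ u - l u) (fun u => ψ u - r u) := rfl

section XiOfGaps

variable {a b : ℝ → ℝ} {s t : ℝ}

lemma bddAbove_image_min_sInf (ha : ∀ u v, 0 ≤ u → BddBelow (a '' Icc u v)) (hs : 0 ≤ s) :
    BddAbove ((fun u => min (b u) (sInf (a '' Icc u t))) '' Icc s t) := by
  refine ⟨a t, ?_⟩
  rintro _ ⟨u, hu, rfl⟩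
  exact (min_le_right _ _).trans (csInf_image_Icc_le_right (ha u t (hs.trans hu.1)) hu.2)

lemma xiOfGaps_mem_Icc (ha : ∀ u v, 0 ≤ u → BddBelow (a '' Icc u v))
    (hba : ∀ u, 0 ≤ u → b u ≤ a u) (ht : 0 ≤ t) : xiOfGaps a b t ∈ Icc (b t) (a t) := by
  refine ⟨le_max_of_le_right ?_, max_le ?_ ?_⟩
  · refine le_csSup_of_le (bddAbove_image_min_sInf ha le_rfl) ⟨t, ⟨ht, le_rfl⟩, rfl⟩ ?_
    simp [hba t ht]
  · exact (min_le_right _ _).trans (csInf_image_Icc_le_right (ha 0 t le_rfl) ht)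
  · refine csSup_le ((nonempty_Icc.2 ht).image _) ?_
    rintro _ ⟨u, hu, rfl⟩
    exact (min_le_right _ _).trans (csInf_image_Icc_le_right (ha u t hu.1) hu.2)

lemma xiOfGaps_zero (hba : ∀ u, 0 ≤ u → b u ≤ a u) :
    xiOfGaps a b 0 = max (b 0) (min 0 (a 0)) := by
  have := hba 0 le_rfl
  simp only [xiOfGaps, Icc_self, image_singleton, csInf_singleton, csSup_singleton,
    min_eq_left this]
  rcases le_total 0 (b 0) with h | h
  · simp [h, this, min_le_of_left_le h]
  · simp [h, max_comm]

lemma xiOfGaps_eq_of_le (ha : ∀ u v, 0 ≤ u → BddBelow (a '' Icc u v)) (hs : 0 ≤ s)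
    (hst : s ≤ t) :
    xiOfGaps a b t = max (min (xiOfGaps a b s) (sInf (a '' Icc s t)))
      (sSup ((fun u => min (b u) (sInf (a '' Icc u t))) '' Icc s t)) := by
  set K := sInf (a '' Icc s t)
  have hsplit : ∀ u ∈ Icc 0 s, sInf (a '' Icc u t) = min (sInf (a '' Icc u s)) K :=
    fun u hu => sInf_image_Icc_eq_min hu.2 hst (ha u s hu.1) (ha s t hs)
  have hlow : sSup ((fun u => min (b u) (sInf (a '' Icc u t))) '' Icc 0 s) =
      min (sSup ((fun u => min (b u) (sInf (a '' Icc u s))) '' Icc 0 s)) K := by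
    rw [Monotone.map_csSup_of_continuousAt (f := fun x => min x K)
      (continuous_id.min continuous_const).continuousAt (fun _ _ h => min_le_min_right K h)
      ((nonempty_Icc.2 hs).image _)
      (bddAbove_image_min_sInf ha le_rfl), image_image]
    exact congrArg sSup (image_congr fun u hu => by simp only [hsplit u hu, min_assoc])
  have hupper : BddAbove ((fun u => min (b u) (sInf (a '' Icc u t))) '' Icc 0 s) :=
    (bddAbove_image_min_sInf ha le_rfl).mono (image_mono (Icc_subset_Icc_right hst))
  rw [xiOfGaps, xiOfGaps, hsplit 0 ⟨le_rfl, hs⟩, ← Icc_union_Icc_eq_Icc hs hst, image_union,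
    csSup_union hupper ((nonempty_Icc.2 hs).image _) (bddAbove_image_min_sInf ha hs)
      ((nonempty_Icc.2 hst).image _), hlow, ← min_assoc, ← max_assoc, ← min_max_distrib_right]

lemma xiOfGaps_eq_of_const (ha : ∀ u v, 0 ≤ u → BddBelow (a '' Icc u v))
    (hba : ∀ u, 0 ≤ u → b u ≤ a u) (hs : 0 ≤ s) (hst : s < t)
    (hc : ∀ u ∈ Ico s t, a u = a s ∧ b u = b s) :
    xiOfGaps a b t = max (b t) (min (xiOfGaps a b s) (a t)) := by
  have ht : 0 ≤ t := hs.trans hst.le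
  obtain ⟨hbX, hXa⟩ := xiOfGaps_mem_Icc ha hba hs
  have hinf_le : ∀ u ∈ Icc s t, sInf (a '' Icc u t) ≤ a t :=
    fun u hu => csInf_image_Icc_le_right (ha u t (hs.trans hu.1)) hu.2
  have le_inf : min (a s) (a t) ≤ sInf (a '' Icc s t) := by
    refine le_csInf ((nonempty_Icc.2 hst.le).image a) ?_
    rintro _ ⟨w, hw, rfl⟩
    rcases hw.2.eq_or_lt with rfl | hwt
    exacts [min_le_right _ _, (hc w ⟨hw.1, hwt⟩).1 ▸ min_le_left _ _]
  rw [xiOfGaps_eq_of_le ha hs hst.le]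
  apply le_antisymm
  · refine max_le ((min_le_min le_rfl (hinf_le s ⟨le_rfl, hst.le⟩)).trans (le_max_right _ _))
      (csSup_le ((nonempty_Icc.2 hst.le).image _) ?_)
    rintro _ ⟨u, hu, rfl⟩
    rcases hu.2.eq_or_lt with rfl | hut
    · exact (min_le_left _ _).trans (le_max_left _ _)
    · dsimp only
      rw [(hc u ⟨hu.1, hut⟩).2]
      exact (min_le_min hbX (hinf_le u hu)).trans (le_max_right _ _)
  · refine max_le (le_max_of_le_right ?_) (le_max_of_le_left ?_)
    · refine le_csSup_of_le (bddAbove_image_min_sInf ha hs) ⟨t, ⟨hst.le, le_rfl⟩, rfl⟩ ?_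
      simp [hba t ht]
    · exact le_min (min_le_left _ _)
        ((le_min ((min_le_left _ _).trans hXa) (min_le_right _ _)).trans le_inf)

lemma xiOfGaps_eqOn_of_const (ha : ∀ u v, 0 ≤ u → BddBelow (a '' Icc u v))
    (hba : ∀ u, 0 ≤ u → b u ≤ a u) (hs : 0 ≤ s)
    (hc : ∀ u ∈ Ico s t, a u = a s ∧ b u = b s) :
    ∀ u ∈ Ico s t, xiOfGaps a b u = xiOfGaps a b s := by
  intro u hu
  rcases hu.1.eq_or_lt with rfl | hsu
  · rfl
  obtain ⟨hbX, hXa⟩ := xiOfGaps_mem_Icc ha hba hs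
  rw [xiOfGaps_eq_of_const ha hba hs hsu fun w hw => hc w ⟨hw.1, hw.2.trans hu.2⟩,
    (hc u hu).1, (hc u hu).2, min_eq_left hXa, max_eq_right hbX]

variable {S : Finset ℝ}

lemma xiOfGaps_eq_of_gap (ha : PiecewiseConstantWith S a)
    (hb : PiecewiseConstantWith S b) (hba : ∀ u, 0 ≤ u → b u ≤ a u) (hs : 0 ≤ s)
    (hst : s < t) (hgap : ∀ w ∈ Ioo s t, w ∉ S) :
    xiOfGaps a b t = max (b t) (min (xiOfGaps a b s) (a t)) :=
  xiOfGaps_eq_of_const (fun _ _ hu => ha.bddBelow_image_Icc hu) hba hs hst fun u hu =>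
    ⟨ha.eq_of_forall_notMem_Ioo hs hgap u hu, hb.eq_of_forall_notMem_Ioo hs hgap u hu⟩

lemma xiOfGaps_eqOn_of_gap (ha : PiecewiseConstantWith S a)
    (hb : PiecewiseConstantWith S b) (hba : ∀ u, 0 ≤ u → b u ≤ a u) (hs : 0 ≤ s)
    (hgap : ∀ w ∈ Ioo s t, w ∉ S) :
    ∀ u ∈ Ico s t, xiOfGaps a b u = xiOfGaps a b s :=
  xiOfGaps_eqOn_of_const (fun _ _ hu => ha.bddBelow_image_Icc hu) hba hs fun u hu =>
    ⟨ha.eq_of_forall_notMem_Ioo hs hgap u hu, hb.eq_of_forall_notMem_Ioo hs hgap u hu⟩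

lemma xiOfGaps_le_of_forall_lower_lt (ha : PiecewiseConstantWith S a)
    (hb : PiecewiseConstantWith S b) (hba : ∀ u, 0 ≤ u → b u ≤ a u) (hs : 0 ≤ s)
    (hst : s ≤ t) (h : ∀ u, s < u → u ≤ t → b u < xiOfGaps a b u) :
    xiOfGaps a b t ≤ xiOfGaps a b s :=
  le_of_le_across_gaps S _ hst fun _ u hsm hmu hut hgap =>
    le_of_eq_max_min_of_lower_lt (xiOfGaps_eq_of_gap ha hb hba (hs.trans hsm) hmu hgap)
      (h u (hsm.trans_lt hmu) hut)

lemma le_xiOfGaps_of_forall_lt_upper (ha : PiecewiseConstantWith S a)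
    (hb : PiecewiseConstantWith S b) (hba : ∀ u, 0 ≤ u → b u ≤ a u) (hs : 0 ≤ s)
    (hst : s ≤ t) (h : ∀ u, s < u → u ≤ t → xiOfGaps a b u < a u) :
    xiOfGaps a b s ≤ xiOfGaps a b t := by
  refine OrderDual.toDual_le_toDual.1 <|
    le_of_le_across_gaps S (fun u => OrderDual.toDual (xiOfGaps a b u)) hst
      fun m u hsm hmu hut hgap => OrderDual.toDual_le_toDual.2 ?_
  exact le_of_eq_max_min_of_lt_upper (xiOfGaps_eq_of_gap ha hb hba (hs.trans hsm) hmu hgap)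
    (h u (hsm.trans_lt hmu) hut)

end XiOfGaps

theorem esp_piecewise_constant_general (l r ψ : ℝ → ℝ)
    (hlr : ∀ t : ℝ, 0 ≤ t → l t ≤ r t)
    (hlpc : PiecewiseConstant l) (hrpc : PiecewiseConstant r)
    (hψpc : PiecewiseConstant ψ) :
    ESP l r ψ (fun t => ψ t - Xi l r ψ t) (fun t => -Xi l r ψ t) := by
  obtain ⟨Sa, ha⟩ := hψpc.sub hlpc
  obtain ⟨Sb, hb⟩ := hψpc.sub hrpc
  replace ha := ha.mono (Finset.subset_union_left (s₂ := Sb))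
  replace hb := hb.mono (Finset.subset_union_right (s₁ := Sa))
  have hba : ∀ u, 0 ≤ u → ψ u - r u ≤ ψ u - l u :=
    fun u hu => sub_le_sub_left (hlr u hu) _
  rw [Xi_eq_xiOfGaps]
  refine ⟨fun t ht => ?_, fun s t hs hst h => ?_, fun s t hs hst h => ?_, fun t ht => ?_, ?_⟩
  · have hX := xiOfGaps_mem_Icc (fun _ _ hu => ha.bddBelow_image_Icc hu) hba ht
    exact ⟨sub_eq_add_neg _ _, le_sub_comm.1 hX.2, sub_le_comm.1 hX.1⟩
  · exact neg_le_neg <| xiOfGaps_le_of_forall_lower_lt ha hb hba hs hst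
      fun u hsu hut => sub_lt_comm.1 (h u hsu hut)
  · exact neg_le_neg <| le_xiOfGaps_of_forall_lt_upper ha hb hba hs hst
      fun u hsu hut => lt_sub_comm.1 (h u hsu hut)
  · obtain ⟨v, hv, hgap⟩ := (Sa ∪ Sb).exists_forall_notMem_Ioo ht
    have hstep := xiOfGaps_eq_of_gap ha hb hba hv.1 hv.2 hgap
    rw [leftLim_eq_of_forall_Ioo hv.2 fun u hu =>
      congrArg Neg.neg (xiOfGaps_eqOn_of_gap ha hb hba hv.1 hgap u ⟨hu.1.le, hu.2⟩)]
    exact ⟨fun h => neg_le_neg (le_of_eq_max_min_of_lower_lt hstep (sub_lt_comm.1 h)),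
      fun h => neg_le_neg (le_of_eq_max_min_of_lt_upper hstep (lt_sub_comm.1 h))⟩
  · have h0 := xiOfGaps_zero hba
    exact ⟨fun h => neg_nonneg.2 (le_of_eq_max_min_of_lower_lt h0 (sub_lt_comm.1 h)),
      fun h => neg_nonpos.2 (le_of_eq_max_min_of_lt_upper h0 (lt_sub_comm.1 h))⟩

/-- For piecewise constant càdlàg `ℓ ≤ r` and `ψ`, each with finitely many jumps,
the pair `(ψ - Ξ_{ℓ,r}(ψ), -Ξ_{ℓ,r}(ψ))` solves the extended Skorokhod problem on
`[ℓ(·), r(·)]` for `ψ`. -/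
theorem esp_piecewise_constant (l r ψ : ℝ → ℝ)
    (hl : Cadlag l) (hr : Cadlag r) (hlr : ∀ t : ℝ, 0 ≤ t → l t ≤ r t)
    (hψ : Cadlag ψ)
    (hlpc : PiecewiseConstant l) (hrpc : PiecewiseConstant r)
    (hψpc : PiecewiseConstant ψ) :
    ESP l r ψ (fun t => ψ t - Xi l r ψ t) (fun t => -Xi l r ψ t) :=
  esp_piecewise_constant_general l r ψ hlr hlpc hrpc hψpc
end

section
/- Monotonicity of constraining processes with respect to the domain: suppose ℓ̃ ≤ ℓ ≤ r ≤ r̃ are càdlàg with inf_t (r(t) − ℓ(t)) > 0. For any càdlàg ψ, let (η_ℓ, η_r) and (η_{ℓ̃}, η_{r̃}) be the constraining processes of the Skorokhod problems on [ℓ(·), r(·)] and [ℓ̃(·), r̃(·)] respectively. Then η_r(t) ≥ η_{r̃}(t) and η_ℓ(t) ≥ η_{ℓ̃}(t) for every t ≥ 0. -/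
open Set Filter

/-! Write `D_ℓ = η_ℓ - η_ℓ̃` and `D_r = η_r - η_r̃`. The wide-domain processes `η_ℓ̃`, `η_r̃`
grow only while `φ'` touches `ℓ̃`, resp. `r̃`, and at such a time `φ' ≤ ℓ ≤ φ` (resp.
`φ ≤ r ≤ φ'`), i.e. `D_r ≤ D_ℓ` (resp. `D_ℓ ≤ D_r`). On a time interval without upper contact
`η_r̃` is constant, so `D_r` is nondecreasing, while `D_ℓ` can only decrease at lower contacts,
where it dominates `D_r`; hence `min D_ℓ D_r` is nondecreasing there, and symmetrically on
intervals without lower contact. Since `ℓ̃ < r̃`, right-continuity gives every time a right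
neighbourhood of one of these two kinds, and the wide processes do not jump at times without
contact, so a real induction shows `min D_ℓ D_r ≥ 0`. -/

open Topology MeasureTheory

theorem forall_of_real_induction {P : ℝ → Prop} (a : ℝ) (hbase : ∀ s < a, P s)
    (hleft : ∀ y, (∀ s < y, P s) → P y)
    (hstep : ∀ c, a ≤ c → (∀ s ≤ c, P s) → ∃ x > c, ∀ s ∈ Ioc c x, P s) (t : ℝ) : P t := by
  by_contra ht
  set G := {x | ∀ s ≤ x, P s}
  have hG_le : ∀ x ∈ G, x ≤ t := fun x hx => not_lt.1 fun hlt => ht (hx t hlt.le)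
  have haG : a ∈ G := fun s hs => hs.lt_or_eq.elim (hbase s) fun h => h ▸ hleft a hbase
  have hG : BddAbove G := ⟨t, hG_le⟩
  set c := sSup G
  have hbelow : ∀ s < c, P s := fun s hs => by
    obtain ⟨x, hxG, hsx⟩ := exists_lt_of_lt_csSup ⟨a, haG⟩ hs
    exact hxG s hsx.le
  have hcG : c ∈ G := fun s hs => hs.lt_or_eq.elim (hbelow s) fun h => h ▸ hleft c hbelow
  obtain ⟨x, hcx, hx⟩ := hstep c (le_csSup hG haG) hcG
  have hxG : x ∈ G := fun s hs => (le_or_gt s c).elim (hcG s) fun h => hx s ⟨h, hs⟩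
  exact (le_csSup hG hxG).not_gt hcx

theorem le_sub_of_frequently_le_sub {u U : ℝ → ℝ} (hu : Monotone u) {w m : ℝ}
    (hU : Tendsto U (𝓝[<] w) (𝓝 (U w))) (hfreq : ∃ᶠ s in 𝓝[<] w, m ≤ u s - U s) :
    m ≤ u w - U w := by
  refine ge_of_tendsto_of_frequently (tendsto_const_nhds.sub hU) ?_
  refine (hfreq.and_eventually self_mem_nhdsWithin).mono fun s ⟨hs, hsw⟩ => ?_
  linarith [hu (le_of_lt hsw)]

namespace StieltjesFunction

variable (g : StieltjesFunction ℝ) {A : Set ℝ}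

theorem measure_Iio_eq_zero {a : ℝ} (h : ∀ s < a, g s = 0) : g.measure (Iio a) = 0 := by
  have hbot : Tendsto g atBot (𝓝 0) :=
    tendsto_const_nhds.congr' (eventually_atBot.2 ⟨a - 1, fun s hs => (h s (by linarith)).symm⟩)
  have hleft : Function.leftLim g a = 0 :=
    leftLim_eq_of_tendsto (tendsto_const_nhds.congr' (eventually_nhdsWithin_of_forall
      fun s hs => (h s hs).symm))
  rw [g.measure_Iio hbot, hleft, sub_zero, ENNReal.ofReal_zero]

theorem eq_of_Ioc_subset_of_measure_eq_zero (hA : g.measure Aᶜ = 0) {a b : ℝ} (hab : a ≤ b)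
    (hfree : Ioc a b ⊆ Aᶜ) : g b = g a := by
  have h := measure_mono_null hfree hA
  rw [measure_Ioc, ENNReal.ofReal_eq_zero] at h
  exact le_antisymm (by linarith) (g.mono hab)

theorem tendsto_nhdsLT_of_measure_eq_zero (hA : g.measure Aᶜ = 0) {a : ℝ} (ha : a ∉ A) :
    Tendsto g (𝓝[<] a) (𝓝 (g a)) := by
  have h := measure_mono_null (singleton_subset_iff.2 ha) hA
  rw [measure_singleton, ENNReal.ofReal_eq_zero] at h
  have hleft : Function.leftLim g a = g a := le_antisymm (g.mono.leftLim_le le_rfl) (by linarith)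
  simpa only [hleft] using g.mono.tendsto_leftLim a

theorem le_sub_of_le_sub_on_mem {u : ℝ → ℝ} (hu : Monotone u) (hA : g.measure Aᶜ = 0)
    {x y m : ℝ} (hxy : x ≤ y) (hx : m ≤ u x - g x)
    (hmem : ∀ s ∈ A, x < s → s ≤ y → m ≤ u s - g s) : m ≤ u y - g y := by
  set S := insert x (A ∩ Ioc x y)
  have hS : ∀ s ∈ S, m ≤ u s - g s := by
    rintro s (rfl | ⟨hsA, hxs, hsy⟩)
    exacts [hx, hmem s hsA hxs hsy]
  have hS_le : ∀ s ∈ S, s ≤ y := by rintro s (rfl | ⟨-, -, hsy⟩); exacts [hxy, hsy]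
  have hlub : IsLUB S (sSup S) := isLUB_csSup ⟨x, mem_insert x _⟩ ⟨y, hS_le⟩
  set w := sSup S
  have hxw : x ≤ w := hlub.1 (mem_insert x _)
  have hwy : w ≤ y := hlub.2 hS_le
  have hgw : g y = g w := g.eq_of_Ioc_subset_of_measure_eq_zero hA hwy
    fun s ⟨hws, hsy⟩ hsA => (hlub.1 (Or.inr ⟨hsA, hxw.trans_lt hws, hsy⟩)).not_gt hws
  suffices m ≤ u w - g w by linarith [hu hwy]
  by_cases hwS : w ∈ S
  · exact hS w hwS
  have hwA : w ∉ A := fun hwA =>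
    hwS (Or.inr ⟨hwA, hxw.lt_of_ne fun h => hwS (h ▸ mem_insert x _), hwy⟩)
  refine le_sub_of_frequently_le_sub hu (g.tendsto_nhdsLT_of_measure_eq_zero hA hwA) ?_
  rw [frequently_nhdsWithin_iff]
  refine (hlub.frequently_nhds_mem ⟨x, mem_insert x _⟩).mono fun s hs => ⟨hS s hs, ?_⟩
  exact (hlub.1 hs).lt_of_ne fun h => hwS (h ▸ hs)

end StieltjesFunction

section Comparison

variable {u v : ℝ → ℝ} {U V : StieltjesFunction ℝ} {A B : Set ℝ}

theorem min_sub_le_min_sub_of_Ioc_subset_compl (hu : Monotone u) (hv : Monotone v)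
    (hUA : U.measure Aᶜ = 0) (hVB : V.measure Bᶜ = 0)
    (hcontact : ∀ s ∈ A, v s - V s ≤ u s - U s) {x y : ℝ} (hxy : x ≤ y) (hfree : Ioc x y ⊆ Bᶜ) :
    min (u x - U x) (v x - V x) ≤ min (u y - U y) (v y - V y) := by
  have hv_sub : ∀ s, x ≤ s → s ≤ y → min (u x - U x) (v x - V x) ≤ v s - V s := fun s hxs hsy => by
    have hVs : V s = V x :=
      V.eq_of_Ioc_subset_of_measure_eq_zero hVB hxs ((Ioc_subset_Ioc_right hsy).trans hfree)
    linarith [hv hxs, min_le_right (u x - U x) (v x - V x)]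
  refine le_min (U.le_sub_of_le_sub_on_mem hu hUA hxy (min_le_left _ _) fun s hsA hxs hsy => ?_)
    (hv_sub y hxy le_rfl)
  exact (hv_sub s hxs.le hsy).trans (hcontact s hsA)

theorem nonneg_min_sub_of_forall_lt (hu : Monotone u) (hv : Monotone v)
    (hUA : U.measure Aᶜ = 0) (hVB : V.measure Bᶜ = 0)
    (hcontactA : ∀ s ∈ A, v s - V s ≤ u s - U s) (hcontactB : ∀ s ∈ B, u s - U s ≤ v s - V s)
    (hAB : Disjoint A B) {y : ℝ} (h : ∀ s < y, 0 ≤ min (u s - U s) (v s - V s)) :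
    0 ≤ min (u y - U y) (v y - V y) := by
  have hleft : ∀ᶠ s in 𝓝[<] y, 0 ≤ min (u s - U s) (v s - V s) :=
    eventually_nhdsWithin_of_forall h
  have hU : y ∉ A → 0 ≤ u y - U y := fun hyA =>
    le_sub_of_frequently_le_sub hu (U.tendsto_nhdsLT_of_measure_eq_zero hUA hyA)
      (hleft.mono fun _ hs => hs.trans (min_le_left _ _)).frequently
  have hV : y ∉ B → 0 ≤ v y - V y := fun hyB =>
    le_sub_of_frequently_le_sub hv (V.tendsto_nhdsLT_of_measure_eq_zero hVB hyB)
      (hleft.mono fun _ hs => hs.trans (min_le_right _ _)).frequently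
  by_cases hyA : y ∈ A
  · have hyB := hV (disjoint_left.1 hAB hyA)
    exact le_min (hyB.trans (hcontactA y hyA)) hyB
  · refine le_min (hU hyA) ?_
    by_cases hyB : y ∈ B
    exacts [(hU hyA).trans (hcontactB y hyB), hV hyB]

theorem le_and_le_of_contact (hu : Monotone u) (hv : Monotone v)
    (hUA : U.measure Aᶜ = 0) (hVB : V.measure Bᶜ = 0)
    (hcontactA : ∀ s ∈ A, v s - V s ≤ u s - U s) (hcontactB : ∀ s ∈ B, u s - U s ≤ v s - V s)
    (hAB : Disjoint A B) (hneg : ∀ s < 0, U s ≤ u s ∧ V s ≤ v s)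
    (hright : ∀ c, 0 ≤ c → ∃ x > c, Ioc c x ⊆ Aᶜ ∨ Ioc c x ⊆ Bᶜ) (t : ℝ) :
    U t ≤ u t ∧ V t ≤ v t := by
  suffices 0 ≤ min (u t - U t) (v t - V t) by
    rw [le_min_iff, sub_nonneg, sub_nonneg] at this
    exact this
  refine forall_of_real_induction (P := fun s => 0 ≤ min (u s - U s) (v s - V s)) 0
    (fun s hs => le_min (sub_nonneg.2 (hneg s hs).1) (sub_nonneg.2 (hneg s hs).2))
    (fun y => nonneg_min_sub_of_forall_lt hu hv hUA hVB hcontactA hcontactB hAB) ?_ t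
  intro c hc hle
  obtain ⟨x, hcx, hfree⟩ := hright c hc
  refine ⟨x, hcx, fun s ⟨hcs, hsx⟩ => (hle c le_rfl).trans ?_⟩
  rcases hfree with hfreeA | hfreeB
  · rw [min_comm, min_comm (u s - U s)]
    exact min_sub_le_min_sub_of_Ioc_subset_compl hv hu hVB hUA hcontactB hcs.le
      ((Ioc_subset_Ioc_right hsx).trans hfreeA)
  · exact min_sub_le_min_sub_of_Ioc_subset_compl hu hv hUA hVB hcontactA hcs.le
      ((Ioc_subset_Ioc_right hsx).trans hfreeB)

end Comparison

theorem exists_Ioc_subset_setOf_lt {f g : ℝ → ℝ} {c : ℝ} (hf : ContinuousWithinAt f (Ici c) c)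
    (hg : ContinuousWithinAt g (Ici c) c) (h : f c < g c) :
    ∃ x > c, Ioc c x ⊆ {s | f s < g s} :=
  mem_nhdsGT_iff_exists_Ioc_subset.1
    (nhdsWithin_mono c Ioi_subset_Ici_self (Tendsto.eventually_lt hf hg h))

section SkorokhodProblem

variable {l r ψ φ η : ℝ → ℝ} {ηl ηr : StieltjesFunction ℝ}

theorem SPwith.measure_compl_lower_contact (h : SPwith l r ψ φ η ηl ηr) (h0 : ∀ s < 0, ηl s = 0) :
    ηl.measure {s | 0 ≤ s ∧ φ s = l s}ᶜ = 0 := by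
  refine measure_mono_null (fun s hs => ?_) (measure_union_null (ηl.measure_Iio_eq_zero h0) h.2.2.1)
  rcases lt_or_ge s 0 with hs0 | hs0
  · exact Or.inl hs0
  · exact Or.inr ⟨hs0, (h.1 s hs0).2.1.lt_of_ne fun he => hs ⟨hs0, he.symm⟩⟩

theorem SPwith.measure_compl_upper_contact (h : SPwith l r ψ φ η ηl ηr) (h0 : ∀ s < 0, ηr s = 0) :
    ηr.measure {s | 0 ≤ s ∧ φ s = r s}ᶜ = 0 := by
  refine measure_mono_null (fun s hs => ?_) (measure_union_null (ηr.measure_Iio_eq_zero h0) h.2.2.2)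
  rcases lt_or_ge s 0 with hs0 | hs0
  · exact Or.inl hs0
  · exact Or.inr ⟨hs0, (h.1 s hs0).2.2.lt_of_ne fun he => hs ⟨hs0, he⟩⟩

theorem SPwith.sub_le_sub_of_le {l' r' φ' η' : ℝ → ℝ} {ηl' ηr' : StieltjesFunction ℝ}
    (h : SPwith l r ψ φ η ηl ηr) (h' : SPwith l' r' ψ φ' η' ηl' ηr') {s : ℝ} (hs : 0 ≤ s)
    (hle : φ' s ≤ φ s) : ηr s - ηr' s ≤ ηl s - ηl' s := by
  linarith [(h.1 s hs).1, (h'.1 s hs).1, h.2.1 s hs, h'.2.1 s hs]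

end SkorokhodProblem

theorem constraining_monotone_domain_general
    (l lt r rt ψ φ η φ' η' : ℝ → ℝ) (ηl ηr ηlt ηrt : StieltjesFunction ℝ)
    (hlt : Cadlag lt) (hrt : Cadlag rt)
    (hφ' : Cadlag φ')
    (hltl : ∀ t : ℝ, 0 ≤ t → lt t ≤ l t)
    (hrrt : ∀ t : ℝ, 0 ≤ t → r t ≤ rt t)
    (hsep : ∃ ε : ℝ, 0 < ε ∧ ∀ t : ℝ, 0 ≤ t → ε ≤ r t - l t)
    (hSP : SPwith l r ψ φ η ηl ηr)
    (hSPt : SPwith lt rt ψ φ' η' ηlt ηrt)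
    (hnorm : ∀ s : ℝ, s < 0 → ηl s = 0 ∧ ηr s = 0 ∧ ηlt s = 0 ∧ ηrt s = 0) :
    ∀ t : ℝ, 0 ≤ t → ηrt t ≤ ηr t ∧ ηlt t ≤ ηl t := by
  obtain ⟨ε, hε, hsep⟩ := hsep
  have hlt_rt : ∀ s, 0 ≤ s → lt s < rt s := fun s hs => by
    linarith [hsep s hs, hltl s hs, hrrt s hs]
  have hAB : Disjoint {s | 0 ≤ s ∧ φ' s = lt s} {s | 0 ≤ s ∧ φ' s = rt s} :=
    disjoint_left.2 fun s ⟨hs, hl⟩ ⟨_, hr⟩ => (hlt_rt s hs).ne (hl.symm.trans hr)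
  have hright : ∀ c, 0 ≤ c → ∃ x > c,
      Ioc c x ⊆ {s | 0 ≤ s ∧ φ' s = lt s}ᶜ ∨ Ioc c x ⊆ {s | 0 ≤ s ∧ φ' s = rt s}ᶜ := by
    intro c hc
    obtain ⟨-, hφ'r⟩ := (hSPt.1 c hc).2
    rcases hφ'r.lt_or_eq with hlow | hup
    · obtain ⟨x, hcx, hx⟩ := exists_Ioc_subset_setOf_lt (hφ' c hc).1 (hrt c hc).1 hlow
      exact ⟨x, hcx, Or.inr fun s hs ⟨_, he⟩ => (hx hs).ne he⟩
    · obtain ⟨x, hcx, hx⟩ := exists_Ioc_subset_setOf_lt (hlt c hc).1 (hφ' c hc).1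
        (hup ▸ hlt_rt c hc)
      exact ⟨x, hcx, Or.inl fun s hs ⟨_, he⟩ => (hx hs).ne he.symm⟩
  intro t _
  refine (le_and_le_of_contact ηl.mono ηr.mono
    (hSPt.measure_compl_lower_contact fun s hs => (hnorm s hs).2.2.1)
    (hSPt.measure_compl_upper_contact fun s hs => (hnorm s hs).2.2.2)
    (fun s ⟨hs, he⟩ => hSP.sub_le_sub_of_le hSPt hs (he ▸ (hltl s hs).trans (hSP.1 s hs).2.1))
    (fun s ⟨hs, he⟩ => by
      linarith [hSPt.sub_le_sub_of_le hSP hs (he ▸ (hSP.1 s hs).2.2.trans (hrrt s hs))])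
    hAB (fun s hs => by simp [hnorm s hs]) hright t).symm

/-- Monotonicity of the constraining processes with respect to the domain:
if `ℓ̃ ≤ ℓ ≤ r ≤ r̃` are càdlàg with `inf_{t≥0} (r(t) - ℓ(t)) > 0`, and the pairs
`(η_ℓ, η_r)` and `(η_{ℓ̃}, η_{r̃})` are the constraining processes of the Skorokhod
problems on `[ℓ(·), r(·)]` and `[ℓ̃(·), r̃(·)]` for the same input `ψ` (normalized to
vanish at negative times), then `η_r(t) ≥ η_{r̃}(t)` and `η_ℓ(t) ≥ η_{ℓ̃}(t)` for all
`t ≥ 0`. -/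
theorem constraining_monotone_domain
    (l lt r rt ψ φ η φ' η' : ℝ → ℝ) (ηl ηr ηlt ηrt : StieltjesFunction ℝ)
    (hl : Cadlag l) (hlt : Cadlag lt) (hr : Cadlag r) (hrt : Cadlag rt)
    (hψ : Cadlag ψ) (hφ : Cadlag φ) (hη : Cadlag η) (hφ' : Cadlag φ') (hη' : Cadlag η')
    (hltl : ∀ t : ℝ, 0 ≤ t → lt t ≤ l t)
    (hlr : ∀ t : ℝ, 0 ≤ t → l t ≤ r t)
    (hrrt : ∀ t : ℝ, 0 ≤ t → r t ≤ rt t)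
    (hsep : ∃ ε : ℝ, 0 < ε ∧ ∀ t : ℝ, 0 ≤ t → ε ≤ r t - l t)
    (hSP : SPwith l r ψ φ η ηl ηr)
    (hSPt : SPwith lt rt ψ φ' η' ηlt ηrt)
    (hnorm : ∀ s : ℝ, s < 0 → ηl s = 0 ∧ ηr s = 0 ∧ ηlt s = 0 ∧ ηrt s = 0) :
    ∀ t : ℝ, 0 ≤ t → ηrt t ≤ ηr t ∧ ηlt t ≤ ηl t :=
  constraining_monotone_domain_general l lt r rt ψ φ η φ' η' ηl ηr ηlt ηrt hlt hrt hφ' hltl hrrt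
    hsep hSP hSPt hnorm
end

section
/- Monotonicity of the ESM with respect to the input: let (φ, η) and (φ′, η′) solve the ESP on [ℓ(·), r(·)] for c₀ + ψ and c₀′ + ψ′ respectively, where ψ = ψ′ + ν for a nondecreasing càdlàg ν with ν(0) = 0. Then for every t ≥ 0: (1) max( −(c₀ − c₀′)⁺ − ν(t), −(r(t) − ℓ(t)) ) ≤ φ′(t) − φ(t) ≤ min( (c₀′ − c₀)⁺, r(t) − ℓ(t) ); and (2) η(t) − (c₀′ − c₀)⁺ ≤ η′(t) ≤ η(t) + ν(t) + (c₀ − c₀′)⁺. -/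
open Set Filter

/-!
If `η'` overtakes `η + E` at some time, go back to the last time `σ` before it at which
`η' - η ≤ E`. Past `σ` we have `φ < φ'`, so `φ'` is off the lower barrier and `φ` off
the upper one: `η'` can only decrease and `η` only increase, and a jump at `σ` moves
them the same way. Hence `η' - η` cannot climb above the nondecreasing `E`. Applied with
`E = ν + (c₀ - c₀')⁺` and, with the roles exchanged, with the constant `(c₀' - c₀)⁺`,
this gives the bounds on `η' - η`, and those on `φ' - φ = c₀' - c₀ - ν + (η' - η)`.
-/

open Topology

lemma le_of_antitone_on_excursions {f E : ℝ → ℝ} (hE : MonotoneOn E (Ici 0))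
    (h0 : f 0 ≤ E 0)
    (hexc : ∀ s t, 0 ≤ s → s ≤ t → (∀ u ∈ Ioc s t, E u < f u) → f t ≤ f s)
    (hjump : ∀ t, 0 < t → E t < f t → ∃ L, Tendsto f (𝓝[<] t) (𝓝 L) ∧ f t ≤ L)
    {t : ℝ} (ht : 0 ≤ t) : f t ≤ E t := by
  by_contra! hlt
  set S := {s | s ∈ Icc 0 t ∧ f s ≤ E s}
  have h0S : 0 ∈ S := ⟨⟨le_rfl, ht⟩, h0⟩
  obtain ⟨σ, hσ⟩ : ∃ σ, IsLUB S σ := ⟨sSup S, isLUB_csSup ⟨0, h0S⟩ ⟨t, fun s hs => hs.1.2⟩⟩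
  have hσ0 : 0 ≤ σ := hσ.1 h0S
  have hσt : σ ≤ t := hσ.2 fun s hs => hs.1.2
  rcases le_or_gt (f σ) (E σ) with hσS | hσS
  · have hexc_σ : ∀ u ∈ Ioc σ t, E u < f u := fun u hu =>
      not_le.mp fun hu' => (hσ.1 ⟨⟨hσ0.trans hu.1.le, hu.2⟩, hu'⟩).not_gt hu.1
    linarith [hexc σ t hσ0 hσt hexc_σ, hE hσ0 ht hσt]
  · have hσpos : 0 < σ := hσ0.lt_of_ne fun h => by rw [← h] at hσS; linarith
    obtain ⟨L, hL, hσL⟩ := hjump σ hσpos hσS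
    have hfreq : ∃ᶠ s in 𝓝[<] σ, s ∈ S := by
      have hfreq_le := hσ.frequently_mem ⟨0, h0S⟩
      rw [frequently_nhdsWithin_iff] at hfreq_le ⊢
      refine hfreq_le.mono fun s ⟨hs, hsσ⟩ => ⟨hs, mem_Iio.2 (hsσ.lt_of_ne ?_)⟩
      rintro rfl
      exact hσS.not_ge hs.2
    have hLσ : L ≤ E σ := le_of_tendsto_of_frequently hL <|
      hfreq.mono fun s hs => hs.2.trans (hE hs.1.1 hσ0 (hσ.1 hs))
    linarith

lemma ESP.sub_le_of_lt {l r χ φ η χ' φ' η' E : ℝ → ℝ}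
    (h : ESP l r χ φ η) (h' : ESP l r χ' φ' η')
    (hη : ∀ t, 0 < t → ∃ L, Tendsto η (𝓝[<] t) (𝓝 L))
    (hη' : ∀ t, 0 < t → ∃ L, Tendsto η' (𝓝[<] t) (𝓝 L))
    (hE : MonotoneOn E (Ici 0)) (hE0 : 0 ≤ E 0)
    (hlt : ∀ u, 0 ≤ u → E u < η' u - η u → φ u < φ' u) {t : ℝ} (ht : 0 ≤ t) :
    η' t - η t ≤ E t := by
  obtain ⟨hb, hmono, -, hjump, hφ0, -⟩ := h
  obtain ⟨hb', -, hanti', hjump', -, hφ'0⟩ := h'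
  refine le_of_antitone_on_excursions (f := fun u => η' u - η u) hE ?_ ?_ ?_ ht
  · by_contra! hpos
    have hφφ' := hlt 0 le_rfl hpos
    linarith [hφ0 (hφφ'.trans_le (hb' 0 le_rfl).2.2),
      hφ'0 ((hb 0 le_rfl).2.1.trans_lt hφφ')]
  · intro s t hs hst hgt
    have hφφ' : ∀ u ∈ Ioc s t, φ u < φ' u := fun u hu => hlt u (hs.trans hu.1.le) (hgt u hu)
    have hη'st := hanti' s t hs hst fun u h₁ h₂ =>
      (hb u (hs.trans h₁.le)).2.1.trans_lt (hφφ' u ⟨h₁, h₂⟩)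
    have hηst := hmono s t hs hst fun u h₁ h₂ =>
      (hφφ' u ⟨h₁, h₂⟩).trans_le (hb' u (hs.trans h₁.le)).2.2
    linarith
  · intro u hu hgt
    have hφφ' := hlt u hu.le hgt
    obtain ⟨L, hL⟩ := hη u hu
    obtain ⟨L', hL'⟩ := hη' u hu
    refine ⟨L' - L, hL'.sub hL, ?_⟩
    have hηu := (hjump u hu).1 (hφφ'.trans_le (hb' u hu.le).2.2)
    have hη'u := (hjump' u hu).2 ((hb u hu.le).2.1.trans_lt hφφ')
    rw [leftLim_eq_of_tendsto hL] at hηu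
    rw [leftLim_eq_of_tendsto hL'] at hη'u
    linarith

theorem esp_monotone_input_general
    (l r ψ ψ' ν φ η φ' η' : ℝ → ℝ) (c₀ c₀' : ℝ)
    (hη : Cadlag η) (hη' : Cadlag η')
    (hνmono : ∀ s t : ℝ, 0 ≤ s → s ≤ t → ν s ≤ ν t) (hν0 : ν 0 = 0)
    (hψν : ∀ t : ℝ, 0 ≤ t → ψ t = ψ' t + ν t)
    (h : ESP l r (fun t => c₀ + ψ t) φ η)
    (h' : ESP l r (fun t => c₀' + ψ' t) φ' η') :
    ∀ t : ℝ, 0 ≤ t →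
      (max (-(max (c₀ - c₀') 0) - ν t) (-(r t - l t)) ≤ φ' t - φ t ∧
        φ' t - φ t ≤ min (max (c₀' - c₀) 0) (r t - l t)) ∧
      (η t - max (c₀' - c₀) 0 ≤ η' t ∧ η' t ≤ η t + ν t + max (c₀ - c₀') 0) := by
  intro t ht
  have hν_mono : MonotoneOn ν (Ici 0) := fun s hs t _ hst => hνmono s t hs hst
  have hν_nonneg : ∀ u, 0 ≤ u → 0 ≤ ν u := fun u hu => hν0 ▸ hνmono 0 u le_rfl hu
  have hgap : ∀ u, 0 ≤ u → φ u - φ' u = c₀ - c₀' + ν u + (η u - η' u) := fun u hu => by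
    simp only [(h.1 u hu).1, (h'.1 u hu).1, hψν u hu]
    ring
  have hposPart := max_zero_sub_max_neg_zero_eq_self (c₀ - c₀')
  rw [neg_sub] at hposPart
  have hη'_le : η' t - η t ≤ ν t + max (c₀ - c₀') 0 :=
    h.sub_le_of_lt h' (fun t ht => (hη t ht.le).2 ht) (fun t ht => (hη' t ht.le).2 ht)
      (hν_mono.add_const _) (by simp [hν0]) (fun u hu hgt => by
        linarith [hgap u hu, le_max_left (c₀ - c₀') 0]) ht
  have hη_le : η t - η' t ≤ max (c₀' - c₀) 0 :=
    h'.sub_le_of_lt h (fun t ht => (hη' t ht.le).2 ht) (fun t ht => (hη t ht.le).2 ht)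
      monotoneOn_const (le_max_right _ _) (fun u hu hgt => by
        linarith [hgap u hu, hν_nonneg u hu, le_max_left (c₀' - c₀) 0]) ht
  have hφ := h.1 t ht
  have hφ' := h'.1 t ht
  refine ⟨⟨max_le ?_ ?_, le_min ?_ ?_⟩, ?_, ?_⟩ <;> linarith [hgap t ht]

/-- Monotonicity of the extended Skorokhod map with respect to the input: if
`(φ, η)` and `(φ', η')` solve the ESP on `[ℓ(·), r(·)]` for `c₀ + ψ` and `c₀' + ψ'`
respectively, where `ψ = ψ' + ν` for a nondecreasing càdlàg `ν` with `ν(0) = 0`,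
then for every `t ≥ 0`:
(1) `max(-(c₀ - c₀')⁺ - ν(t), -(r(t) - ℓ(t))) ≤ φ'(t) - φ(t) ≤ min((c₀' - c₀)⁺, r(t) - ℓ(t))`;
(2) `η(t) - (c₀' - c₀)⁺ ≤ η'(t) ≤ η(t) + ν(t) + (c₀ - c₀')⁺`. -/
theorem esp_monotone_input
    (l r ψ ψ' ν φ η φ' η' : ℝ → ℝ) (c₀ c₀' : ℝ)
    (hl : Cadlag l) (hr : Cadlag r) (hlr : ∀ t : ℝ, 0 ≤ t → l t ≤ r t)
    (hψ : Cadlag ψ) (hψ' : Cadlag ψ') (hν : Cadlag ν)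
    (hφ : Cadlag φ) (hη : Cadlag η) (hφ' : Cadlag φ') (hη' : Cadlag η')
    (hνmono : ∀ s t : ℝ, 0 ≤ s → s ≤ t → ν s ≤ ν t) (hν0 : ν 0 = 0)
    (hψν : ∀ t : ℝ, 0 ≤ t → ψ t = ψ' t + ν t)
    (h : ESP l r (fun t => c₀ + ψ t) φ η)
    (h' : ESP l r (fun t => c₀' + ψ' t) φ' η') :
    ∀ t : ℝ, 0 ≤ t →
      (max (-(max (c₀ - c₀') 0) - ν t) (-(r t - l t)) ≤ φ' t - φ t ∧
        φ' t - φ t ≤ min (max (c₀' - c₀) 0) (r t - l t)) ∧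
      (η t - max (c₀' - c₀) 0 ≤ η' t ∧ η' t ≤ η t + ν t + max (c₀ - c₀') 0) :=
  esp_monotone_input_general l r ψ ψ' ν φ η φ' η' c₀ c₀' hη hη' hνmono hν0 hψν h h'
end
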